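/- arXiv:2009.10957 — 2 statements merged into one kernel-verified Lean document; each statement's English description precedes it below -/
import Mathlib

section
/- Let N ≥ 2 and s ∈ (0,1). The function c_s : (−N, 2s) → ℝ, c_s(τ) = 2^{2s} Γ((N+τ)/2) Γ((2s−τ)/2) / (Γ(−τ/2) Γ((N−2s+τ)/2)), is strictly concave on (−N,2s); it satisfies c_s(τ) = c_s(2s−N−τ) for all τ ∈ (−N,2s); it attains its maximum uniquely at τ = (2s−N)/2 with maximal value 2^{2s} Γ((N+2s)/4)² / Γ((N−2s)/4)²; and c_s(τ) → −∞ as τ → −N⁺ and as τ → 2s⁻. -/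
open MeasureTheory Filter Set Topology Metric

noncomputable section

/-- Euclidean space `ℝ^N`. -/
abbrev EN (N : ℕ) := EuclideanSpace ℝ (Fin N)

/-- The normalizing constant `C_{N,s}` of the fractional Laplacian. -/
def CNs (N : ℕ) (s : ℝ) : ℝ :=
  2 ^ (2*s) * Real.pi ^ (-(N:ℝ)/2) * s * Real.Gamma ((N + 2*s)/2) / Real.Gamma (1 - s)

/-- The optimal fractional Hardy constant `μ₀`. -/
def mu0 (N : ℕ) (s : ℝ) : ℝ :=
  -(2 ^ (2*s) * Real.Gamma ((N + 2*s)/4) ^ 2 / Real.Gamma ((N - 2*s)/4) ^ 2)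

/-- The function `τ ↦ c_s(τ)`. -/
def csFun (N : ℕ) (s τ : ℝ) : ℝ :=
  2 ^ (2*s) * Real.Gamma ((N + τ)/2) * Real.Gamma ((2*s - τ)/2) /
    (Real.Gamma (-τ/2) * Real.Gamma ((N - 2*s + τ)/2))

/-- `u` has fractional Laplacian `(-Δ)^s u (x) = L` at `x`, as a principal value. -/
def HasFracLap (N : ℕ) (s : ℝ) (u : EN N → ℝ) (x : EN N) (L : ℝ) : Prop :=
  Tendsto (fun ε : ℝ =>
      CNs N s * ∫ z in {z : EN N | ε ≤ dist x z}, (u x - u z) / dist x z ^ ((N:ℝ) + 2*s))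
    (𝓝[>] 0) (𝓝 L)

/-- `v` has weighted fractional Laplacian `(-Δ)^s_{Γ_μ} v (x) = L` at `x`, where the weight
is `Γ_μ(z) = ‖z‖ ^ τp` with `τp = τ₊(s,μ)`. -/
def HasWFracLap (N : ℕ) (s τp : ℝ) (v : EN N → ℝ) (x : EN N) (L : ℝ) : Prop :=
  Tendsto (fun ε : ℝ =>
      CNs N s * ∫ z in {z : EN N | ε ≤ dist x z},
        (v x - v z) * ‖z‖ ^ τp / dist x z ^ ((N:ℝ) + 2*s))
    (𝓝[>] 0) (𝓝 L)

/-- Membership in `L¹(ℝ^N, dx/(1+|x|^{N+2s}))`. -/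
def MemL1w (N : ℕ) (s : ℝ) (u : EN N → ℝ) : Prop :=
  Integrable (fun x : EN N => u x / (1 + ‖x‖ ^ ((N:ℝ) + 2*s)))

/-- Membership in `L^∞_loc(ℝ^N \ {0})`. -/
def LocBddAway (N : ℕ) (u : EN N → ℝ) : Prop :=
  ∀ K : Set (EN N), IsCompact K → (0:EN N) ∉ K → ∃ C : ℝ, ∀ x ∈ K, |u x| ≤ C

/-- Local `θ`-Hölder continuity on compact subsets of `S`, i.e. `C^θ_loc(S)`. -/
def HolderLocOn (N : ℕ) (θ : ℝ) (f : EN N → ℝ) (S : Set (EN N)) : Prop :=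
  ∀ K ⊆ S, IsCompact K → ∃ C : ℝ, ∀ x ∈ K, ∀ y ∈ K, |f x - f y| ≤ C * dist x y ^ θ

/-- Membership in `L^∞_loc(S)`. -/
def LinfLocOn (N : ℕ) (f : EN N → ℝ) (S : Set (EN N)) : Prop :=
  AEMeasurable f ∧ ∀ K ⊆ S, IsCompact K → ∃ C : ℝ, ∀ x ∈ K, |f x| ≤ C

/-- A bounded `C²` domain: open, connected and bounded, whose boundary is the regular zero
level set of a `C²` defining function. -/
structure IsBoundedC2Domain (N : ℕ) (Ω : Set (EN N)) : Prop where
  isOpen : IsOpen Ω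
  isConnected : IsConnected Ω
  isBounded : Bornology.IsBounded Ω
  c2Boundary : ∃ φ : EN N → ℝ, ContDiff ℝ 2 φ ∧ Ω = {x | φ x < 0} ∧
    ∀ x ∈ frontier Ω, fderiv ℝ φ x ≠ 0

/-- A bounded domain: open, connected and bounded. -/
def IsBoundedDomain (N : ℕ) (Ω : Set (EN N)) : Prop :=
  IsOpen Ω ∧ IsConnected Ω ∧ Bornology.IsBounded Ω

/-- The first standard coordinate vector `e₁ ∈ ℝ^N`. -/
def e1 (N : ℕ) : EN N :=
  (EuclideanSpace.equiv (Fin N) ℝ).symm (fun i => if (i:ℕ) = 0 then 1 else 0)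

/-- The surface measure `ω_{N-1}` of the unit sphere in `ℝ^N`. -/
def omegaN (N : ℕ) : ℝ := N * (volume (ball (0 : EN N) 1)).toReal

/-- The normalization constant `c_{s,0}`. -/
def cs0 (N : ℕ) (s : ℝ) : ℝ :=
  CNs N s * omegaN N * ∫ t in Ioo (0:ℝ) 1, ∫ z in ball (0:EN N) t,
    (‖z‖ ^ (2*s - N) - 1) / ‖e1 N - z‖ ^ ((N:ℝ) + 2*s)

/-- The fundamental solution `Φ_μ`, expressed via the exponent `τ = τ₋(s,μ)`:
`Φ_μ(x) = |x|^τ` for `μ ≠ μ₀` and `Φ_{μ₀}(x) = -|x|^τ ln |x|`. -/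
def Phi (N : ℕ) (s μ τ : ℝ) (x : EN N) : ℝ :=
  if μ = mu0 N s then -(‖x‖ ^ τ * Real.log ‖x‖) else ‖x‖ ^ τ

/-- The integrand appearing in the definition of `c_{s,μ}`. -/
def cIntegrand (N : ℕ) (s μ τm τp : ℝ) (z : EN N) : ℝ :=
  if μ = mu0 N s then ‖z‖ ^ ((2*s - N)/2) * (-Real.log ‖z‖) / ‖e1 N - z‖ ^ ((N:ℝ) + 2*s)
  else (‖z‖ ^ τm - ‖z‖ ^ τp) / ‖e1 N - z‖ ^ ((N:ℝ) + 2*s)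

/-- The normalization constant `c_{s,μ}`. -/
def csmu (N : ℕ) (s μ τm τp : ℝ) : ℝ :=
  CNs N s * omegaN N * ∫ t in Ioo (0:ℝ) 1, ∫ z in ball (0:EN N) t, cIntegrand N s μ τm τp z

/-- The weight `Λ_μ`, expressed via `τp = τ₊(s,μ)`. -/
def Lam (N : ℕ) (s τp : ℝ) (x : EN N) : ℝ :=
  if 2*s - 1 < τp then 1
  else if τp < 2*s - 1 then ‖x‖ ^ (1 - 2*s + τp)
  else 1 + max (-Real.log ‖x‖) 0

/-- The quadratic form `E^s(u,v)`. -/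
def Es (N : ℕ) (s : ℝ) (u v : EN N → ℝ) : ℝ :=
  (CNs N s / 2) *
    ∫ p : EN N × EN N, (u p.1 - u p.2) * (v p.1 - v p.2) / dist p.1 p.2 ^ ((N:ℝ) + 2*s)

/-- The quadratic form `E^s_μ(u,v)`. -/
def Esmu (N : ℕ) (s μ : ℝ) (u v : EN N → ℝ) : ℝ :=
  Es N s u v + μ * ∫ x : EN N, u x * v x / ‖x‖ ^ (2*s)

/-- `E^s_{A,B}(u,u) < ∞`. -/
def FiniteEnergyOn (N : ℕ) (s : ℝ) (u : EN N → ℝ) (A B : Set (EN N)) : Prop :=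
  IntegrableOn (fun p : EN N × EN N => (u p.1 - u p.2)^2 / dist p.1 p.2 ^ ((N:ℝ) + 2*s)) (A ×ˢ B)

/-- Membership in `H^s(ℝ^N)`: locally `L²` with finite Gagliardo seminorm. -/
def MemHs (N : ℕ) (s : ℝ) (u : EN N → ℝ) : Prop :=
  (∀ K : Set (EN N), IsCompact K → IntegrableOn (fun x => (u x)^2) K) ∧
  FiniteEnergyOn N s u univ univ

/-- Membership in `H^s_0(Ω)`. -/
def MemHs0 (N : ℕ) (s : ℝ) (Ω : Set (EN N)) (u : EN N → ℝ) : Prop :=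
  MemHs N s u ∧ ∀ᵐ x : EN N, x ∉ Ω → u x = 0

/-- Membership in `W^s(Ω)`. -/
def MemWs (N : ℕ) (s : ℝ) (Ω : Set (EN N)) (u : EN N → ℝ) : Prop :=
  MemL1w N s u ∧ IntegrableOn (fun x => (u x)^2) Ω ∧
  ∃ Ω' : Set (EN N), IsOpen Ω' ∧ IsConnected Ω' ∧ closure Ω ⊆ Ω' ∧ FiniteEnergyOn N s u Ω Ω'

/-- Membership in `W^s_*(Ω)`. -/
def MemWsStar (N : ℕ) (s : ℝ) (Ω : Set (EN N)) (u : EN N → ℝ) : Prop :=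
  MemL1w N s u ∧ ∀ ε : ℝ, 0 < ε → MemWs N s (Ω \ closedBall 0 ε) u

/-- The distributional identity `L^s_μ u = f` in `Ω \ {0}`, tested against `C^∞_c(Ω\{0})`. -/
def DistrEq (N : ℕ) (s μ : ℝ) (Ω : Set (EN N)) (f u : EN N → ℝ) : Prop :=
  ∀ φ : EN N → ℝ, ContDiff ℝ (⊤ : ℕ∞) φ → HasCompactSupport φ → tsupport φ ⊆ Ω \ {0} →
    ∀ g : EN N → ℝ, (∀ x, HasFracLap N s φ x (g x)) →
      (∫ x, u x * g x) + μ * ∫ x, u x * φ x / ‖x‖ ^ (2*s) = ∫ x in Ω, f x * φ x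

/-- A distributional solution of `L^s_μ u = f` in `Ω \ {0}` with `u = 0` in `ℝ^N \ Ω`. -/
def IsDistrSol (N : ℕ) (s μ : ℝ) (Ω : Set (EN N)) (f u : EN N → ℝ) : Prop :=
  LocBddAway N u ∧ MemL1w N s u ∧ (∀ x ∉ Ω, u x = 0) ∧ DistrEq N s μ Ω f u

set_option maxHeartbeats 1000000

namespace CsAux
set_option linter.unusedSectionVars false

section PF
variable (α β : ℕ → ℝ) (hA : StrictMono α) (hBA : ∀ j, β j < α j) (hAB : ∀ j, α j < β (j+1))

noncomputable def rho (n k : ℕ) : ℝ :=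
  (β k - α k) * ∏ j ∈ (Finset.range (n+1)).erase k, ((β j - α k) / (α j - α k))

include hA hBA hAB

lemma beta_mono : StrictMono β :=
  strictMono_nat_of_lt_succ (fun j => lt_trans (hBA j) (hAB j))

lemma rho_neg {n k : ℕ} : rho α β n k < 0 := by
  have hprod : 0 < ∏ j ∈ (Finset.range (n+1)).erase k, ((β j - α k) / (α j - α k)) := by
    apply Finset.prod_pos
    intro j hj
    have hjk : j ≠ k := Finset.ne_of_mem_erase hj
    rcases lt_or_gt_of_ne hjk with h | h
    · have h1 : β j < α k := lt_of_lt_of_le (hBA j) (le_of_lt (hA h))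
      have h2 : α j < α k := hA h
      exact div_pos_of_neg_of_neg (by linarith) (by linarith)
    · have h1 : α k < β j := by
        have h3 : α k < β (k+1) := hAB k
        have hb := beta_mono α β hA hBA hAB
        exact lt_of_lt_of_le h3 (hb.le_iff_le.mpr h)
      have h2 : α k < α j := hA h
      exact div_pos (by linarith) (by linarith)
  exact mul_neg_of_neg_of_pos (by linarith [hBA k]) hprod

lemma partial_fraction (n : ℕ) :
    ∀ u : ℝ, (∀ j ∈ Finset.range (n+1), u ≠ α j) →
    ∏ j ∈ Finset.range (n+1), ((β j - u) / (α j - u)) =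
      1 + ∑ k ∈ Finset.range (n+1), rho α β n k / (α k - u) := by
  induction n with
  | zero =>
      intro u hu
      have h0 : u ≠ α 0 := hu 0 (by simp)
      have h0' : α 0 - u ≠ 0 := sub_ne_zero.mpr (Ne.symm h0)
      simp only [zero_add, Finset.range_one, Finset.prod_singleton, Finset.sum_singleton, rho,
        Finset.erase_singleton, Finset.prod_empty, mul_one]
      field_simp
      ring
  | succ n ih =>
      intro u hu
      set M := n + 1 with hM
      have hαM : ∀ j ∈ Finset.range (n+1), (α M : ℝ) ≠ α j := by
        intro j hj
        exact (hA (Finset.mem_range.mp hj)).ne'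
      have huj : ∀ j ∈ Finset.range (n+1), u ≠ α j := fun j hj =>
        hu j (Finset.mem_range.mpr ((Finset.mem_range.mp hj).trans (Nat.lt_succ_self _)))
      have huM : u ≠ α M := hu M (Finset.self_mem_range_succ M)
      have hDM : α M - u ≠ 0 := sub_ne_zero.mpr (Ne.symm huM)
      have hD : ∀ j ∈ Finset.range (n+1), α j - u ≠ 0 := fun j hj =>
        sub_ne_zero.mpr (Ne.symm (huj j hj))
      have hG : ∀ k ∈ Finset.range (n+1), α M - α k ≠ 0 := fun k hk =>
        sub_ne_zero.mpr (hαM k hk)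
      have hρ_lo : ∀ k ∈ Finset.range (n+1),
          rho α β M k = rho α β n k * ((β M - α k) / (α M - α k)) := by
        intro k hk
        unfold rho
        rw [show Finset.range (M+1) = insert M (Finset.range (n+1)) from Finset.range_add_one]
        have hkM : k ≠ M := (Finset.mem_range.mp hk).ne
        rw [Finset.erase_insert_of_ne (Ne.symm hkM)]
        rw [Finset.prod_insert (by simp [Finset.mem_erase, hM])]
        ring
      have hρ_M : rho α β M M =
          (β M - α M) * ∏ j ∈ Finset.range (n+1), ((β j - α M) / (α j - α M)) := by
        unfold rho
        rw [show Finset.range (M+1) = insert M (Finset.range (n+1)) from Finset.range_add_one]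
        rw [Finset.erase_insert (by simp [hM])]
      have IHu := ih u huj
      have IHM := ih (α M) hαM
      rw [Finset.prod_range_succ, IHu]
      conv_rhs => rw [Finset.sum_range_succ]
      have hfrac : (β M - u) / (α M - u) = 1 + (β M - α M) / (α M - u) := by
        field_simp
        ring
      rw [hfrac]
      set X := ∑ k ∈ Finset.range (n+1), rho α β n k / (α k - u) with hX
      set σ := β M - α M with hσ
      have E1 : ∑ k ∈ Finset.range M, rho α β M k / (α k - u)
          = X + ∑ k ∈ Finset.range M, (rho α β n k * σ / (α M - α k)) / (α k - u) := by
        rw [hX, ← Finset.sum_add_distrib]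
        refine Finset.sum_congr rfl fun k hk => ?_
        rw [hρ_lo k hk]
        have h1 := hD k hk
        have h2 := hG k hk
        field_simp
        ring
      have E2 : rho α β M M = σ - ∑ k ∈ Finset.range M, rho α β n k * σ / (α M - α k) := by
        rw [hρ_M, IHM, mul_add, mul_one, Finset.mul_sum]
        have hper : ∀ k ∈ Finset.range M, σ * (rho α β n k / (α k - α M))
            = -(rho α β n k * σ / (α M - α k)) := by
          intro k hk
          have h2 := hG k hk
          have h2' : α k - α M ≠ 0 := fun h => h2 (by linarith [sub_eq_zero.mp h])
          field_simp
          ring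
        rw [Finset.sum_congr rfl hper, Finset.sum_neg_distrib]
        ring
      have E3 : ∑ k ∈ Finset.range M, (rho α β n k * σ / (α M - α k)) / (α k - u)
          - (∑ k ∈ Finset.range M, rho α β n k * σ / (α M - α k)) / (α M - u)
          = X * (σ / (α M - u)) := by
        rw [hX, Finset.sum_div, ← Finset.sum_sub_distrib, Finset.sum_mul]
        refine Finset.sum_congr rfl fun k hk => ?_
        have h1 := hD k hk
        have h2 := hG k hk
        field_simp
        ring
      rw [E1, E2]
      linear_combination -E3
end PF
section helpers

lemma convexOn_congr' {I : Set ℝ} {f g : ℝ → ℝ} (hf : ConvexOn ℝ I f)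
    (h : ∀ x ∈ I, f x = g x) : ConvexOn ℝ I g := by
  refine ⟨hf.1, fun x hx y hy a b ha hb hab => ?_⟩
  rw [← h x hx, ← h y hy, ← h _ (hf.1 hx hy ha hb hab)]
  exact hf.2 hx hy ha hb hab

lemma concaveOn_congr' {I : Set ℝ} {f g : ℝ → ℝ} (hf : ConcaveOn ℝ I f)
    (h : ∀ x ∈ I, f x = g x) : ConcaveOn ℝ I g := by
  refine ⟨hf.1, fun x hx y hy a b ha hb hab => ?_⟩
  rw [← h x hx, ← h y hy, ← h _ (hf.1 hx hy ha hb hab)]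
  exact hf.2 hx hy ha hb hab

lemma strictConvexOn_congr' {I : Set ℝ} {f g : ℝ → ℝ} (hf : StrictConvexOn ℝ I f)
    (h : ∀ x ∈ I, f x = g x) : StrictConvexOn ℝ I g := by
  refine ⟨hf.1, fun x hx y hy hxy a b ha hb hab => ?_⟩
  rw [← h x hx, ← h y hy, ← h _ (hf.1 hx hy ha.le hb.le hab)]
  exact hf.2 hx hy hxy ha hb hab

lemma strictConvexOn_smul_pos {I : Set ℝ} {f : ℝ → ℝ} {c : ℝ} (hc : 0 < c)
    (hf : StrictConvexOn ℝ I f) : StrictConvexOn ℝ I (fun x => c * f x) := by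
  refine ⟨hf.1, fun x hx y hy hxy a b ha hb hab => ?_⟩
  have := hf.2 hx hy hxy ha hb hab
  simp only [smul_eq_mul] at this ⊢
  nlinarith

lemma convexOn_comp_affine {f : ℝ → ℝ} {t : Set ℝ} (hf : ConvexOn ℝ t f)
    {I : Set ℝ} (hI : Convex ℝ I) (m b : ℝ) (hmap : ∀ x ∈ I, m*x+b ∈ t) :
    ConvexOn ℝ I (fun x => f (m*x+b)) := by
  refine ⟨hI, fun x hx y hy a c ha hc hac => ?_⟩
  have key : m*(a•x+c•y)+b = a•(m*x+b) + c•(m*y+b) := by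
    simp only [smul_eq_mul]
    linear_combination (-b) * hac
  have goal := hf.2 (hmap x hx) (hmap y hy) ha hc hac
  rw [← key] at goal
  exact goal

lemma strictConvexOn_comp_affine {f : ℝ → ℝ} {t : Set ℝ} (hf : StrictConvexOn ℝ t f)
    {I : Set ℝ} (hI : Convex ℝ I) (m b : ℝ) (hm : m ≠ 0) (hmap : ∀ x ∈ I, m*x+b ∈ t) :
    StrictConvexOn ℝ I (fun x => f (m*x+b)) := by
  refine ⟨hI, fun x hx y hy hxy a c ha hc hac => ?_⟩
  have key : m*(a•x+c•y)+b = a•(m*x+b) + c•(m*y+b) := by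
    simp only [smul_eq_mul]
    linear_combination (-b) * hac
  have hne : m*x+b ≠ m*y+b := fun h => hxy (mul_left_cancel₀ hm (by linarith))
  have goal := hf.2 (hmap x hx) (hmap y hy) hne ha hc hac
  rw [← key] at goal
  exact goal

lemma convexOn_inv_pos : ConvexOn ℝ (Ioi (0:ℝ)) (fun x : ℝ => x⁻¹) := by
  have := (strictConvexOn_zpow (m := -1) (by norm_num) (by norm_num)).convexOn
  refine convexOn_congr' this fun x _ => by simp
lemma strictConvexOn_inv_pos : StrictConvexOn ℝ (Ioi (0:ℝ)) (fun x : ℝ => x⁻¹) := by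
  have h := strictConvexOn_zpow (m := -1) (by norm_num) (by norm_num)
  refine ⟨h.1, fun x hx y hy hxy a c ha hc hac => ?_⟩
  have := h.2 hx hy hxy ha hc hac
  simpa using this

/-- convexity of `τ ↦ (a^2 - ((τ-d)/2)^2)⁻¹` on a set where `|(τ-d)/2| < r ≤ a`. -/
lemma convexOn_invquad {I : Set ℝ} (hI : Convex ℝ I) (d r a : ℝ) (hr : 0 < r) (hra : r ≤ a)
    (hv : ∀ τ ∈ I, |(τ - d)/2| < r) :
    ConvexOn ℝ I (fun τ => (a^2 - ((τ - d)/2)^2)⁻¹) := by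
  have h1 : ConvexOn ℝ I (fun τ => ((-(1:ℝ)/2)*τ + (a + d/2))⁻¹) :=
    convexOn_comp_affine convexOn_inv_pos hI _ _ (fun x hx => by
      have := hv x hx; rw [abs_lt] at this
      simp only [Set.mem_Ioi]
      nlinarith [this.1, this.2])
  have h2 : ConvexOn ℝ I (fun τ => (((1:ℝ)/2)*τ + (a - d/2))⁻¹) :=
    convexOn_comp_affine convexOn_inv_pos hI _ _ (fun x hx => by
      have := hv x hx; rw [abs_lt] at this
      simp only [Set.mem_Ioi]
      nlinarith [this.1, this.2])
  have ha : 0 < a := lt_of_lt_of_le hr hra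
  have h3 := (h1.add h2).smul (c := 1/(2*a)) (by positivity)
  refine convexOn_congr' h3 fun x hx => ?_
  simp only [Pi.add_apply, smul_eq_mul]
  have hvx := hv x hx; rw [abs_lt] at hvx
  have e1 : (-(1:ℝ)/2)*x + (a + d/2) = a - (x - d)/2 := by ring
  have e2 : ((1:ℝ)/2)*x + (a - d/2) = a + (x - d)/2 := by ring
  rw [e1, e2]
  have n1 : a - (x - d)/2 ≠ 0 := by nlinarith [hvx.1, hvx.2]
  have n2 : a + (x - d)/2 ≠ 0 := by nlinarith [hvx.1, hvx.2]
  have h2a : (2*a) ≠ 0 := by positivity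
  rw [inv_add_inv n1 n2, show a - (x-d)/2 + (a + (x-d)/2) = 2*a by ring,
    show (a - (x-d)/2) * (a + (x-d)/2) = a^2 - ((x-d)/2)^2 by ring,
    one_div, div_eq_mul_inv, ← mul_assoc, inv_mul_cancel₀ h2a, one_mul]

lemma strictConvexOn_invquad {I : Set ℝ} (hI : Convex ℝ I) (d r a : ℝ) (hr : 0 < r) (hra : r ≤ a)
    (hv : ∀ τ ∈ I, |(τ - d)/2| < r) :
    StrictConvexOn ℝ I (fun τ => (a^2 - ((τ - d)/2)^2)⁻¹) := by
  have ha : 0 < a := lt_of_lt_of_le hr hra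
  have h1 : StrictConvexOn ℝ I (fun τ => ((-(1:ℝ)/2)*τ + (a + d/2))⁻¹) :=
    strictConvexOn_comp_affine strictConvexOn_inv_pos hI _ _ (by norm_num) (fun x hx => by
      have := hv x hx; rw [abs_lt] at this
      simp only [Set.mem_Ioi]
      nlinarith [this.1, this.2])
  have h2 : ConvexOn ℝ I (fun τ => (((1:ℝ)/2)*τ + (a - d/2))⁻¹) :=
    convexOn_comp_affine convexOn_inv_pos hI _ _ (fun x hx => by
      have := hv x hx; rw [abs_lt] at this
      simp only [Set.mem_Ioi]
      nlinarith [this.1, this.2])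
  have h1s := strictConvexOn_smul_pos (c := 1/(2*a)) (by positivity) h1
  have h2s := h2.smul (c := 1/(2*a)) (by positivity)
  have h3 := h1s.add_convexOn h2s
  refine strictConvexOn_congr' h3 fun x hx => ?_
  simp only [Pi.add_apply, smul_eq_mul]
  have hvx := hv x hx; rw [abs_lt] at hvx
  have e1 : (-(1:ℝ)/2)*x + (a + d/2) = a - (x - d)/2 := by ring
  have e2 : ((1:ℝ)/2)*x + (a - d/2) = a + (x - d)/2 := by ring
  rw [e1, e2]
  have n1 : a - (x - d)/2 ≠ 0 := by nlinarith [hvx.1, hvx.2]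
  have n2 : a + (x - d)/2 ≠ 0 := by nlinarith [hvx.1, hvx.2]
  have h2a : (2*a) ≠ 0 := by positivity
  rw [← mul_add, inv_add_inv n1 n2, show a - (x-d)/2 + (a + (x-d)/2) = 2*a by ring,
    show (a - (x-d)/2) * (a + (x-d)/2) = a^2 - ((x-d)/2)^2 by ring,
    one_div, div_eq_mul_inv, ← mul_assoc, inv_mul_cancel₀ h2a, one_mul]
end helpers
def pp (N : ℕ) (s : ℝ) : ℝ := ((N:ℝ) - 2*s)/4
def AA (N : ℕ) (s : ℝ) (k : ℕ) : ℝ := (pp N s + s + k)^2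
def BB (N : ℕ) (s : ℝ) (k : ℕ) : ℝ := (pp N s + k)^2
def vv (N : ℕ) (s τ : ℝ) : ℝ := (τ - (2*s - (N:ℝ))/2)/2
def QQ (N : ℕ) (s : ℝ) (n : ℕ) (τ : ℝ) : ℝ :=
  2^(2*s) * (n:ℝ)^(2*s) *
    ∏ j ∈ Finset.range (n+1), ((BB N s j - vv N s τ^2)/(AA N s j - vv N s τ^2))

lemma prod_ratio_eq (t a b c d : ℝ) (hsum : a + b = c + d + 2*t)
    (n : ℕ) (hn : 1 ≤ n)
    (ha : ∀ j ∈ Finset.range (n+1), a + (j:ℝ) ≠ 0)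
    (hb : ∀ j ∈ Finset.range (n+1), b + (j:ℝ) ≠ 0)
    (hc : ∀ j ∈ Finset.range (n+1), c + (j:ℝ) ≠ 0)
    (hd : ∀ j ∈ Finset.range (n+1), d + (j:ℝ) ≠ 0) :
    (n:ℝ)^(2*t) * ∏ j ∈ Finset.range (n+1), (((c+j)*(d+j))/((a+j)*(b+j)))
      = (Real.GammaSeq a n * Real.GammaSeq b n) / (Real.GammaSeq c n * Real.GammaSeq d n) := by
  have hn0 : (0:ℝ) < n := by exact_mod_cast hn
  unfold Real.GammaSeq
  rw [Finset.prod_div_distrib, Finset.prod_mul_distrib, Finset.prod_mul_distrib]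
  have hPa : ∏ j ∈ Finset.range (n+1), (a+(j:ℝ)) ≠ 0 := Finset.prod_ne_zero_iff.mpr ha
  have hPb : ∏ j ∈ Finset.range (n+1), (b+(j:ℝ)) ≠ 0 := Finset.prod_ne_zero_iff.mpr hb
  have hPc : ∏ j ∈ Finset.range (n+1), (c+(j:ℝ)) ≠ 0 := Finset.prod_ne_zero_iff.mpr hc
  have hPd : ∏ j ∈ Finset.range (n+1), (d+(j:ℝ)) ≠ 0 := Finset.prod_ne_zero_iff.mpr hd
  have hfac : ((n.factorial : ℕ) : ℝ) ≠ 0 := Nat.cast_ne_zero.mpr n.factorial_ne_zero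
  have hpc : (n:ℝ)^c ≠ 0 := (Real.rpow_pos_of_pos hn0 c).ne'
  have hpd : (n:ℝ)^d ≠ 0 := (Real.rpow_pos_of_pos hn0 d).ne'
  have hab : (n:ℝ)^a * (n:ℝ)^b = (n:ℝ)^c * (n:ℝ)^d * (n:ℝ)^(2*t) := by
    rw [← Real.rpow_add hn0, ← Real.rpow_add hn0, ← Real.rpow_add hn0, hsum]
  have e1 : (n:ℝ)^a * ↑n.factorial / (∏ j ∈ Finset.range (n+1), (a+(j:ℝ))) *
      ((n:ℝ)^b * ↑n.factorial / (∏ j ∈ Finset.range (n+1), (b+(j:ℝ))))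
      = (n:ℝ)^c * (n:ℝ)^d * (n:ℝ)^(2*t) * (↑n.factorial)^2 /
        ((∏ j ∈ Finset.range (n+1), (a+(j:ℝ))) * (∏ j ∈ Finset.range (n+1), (b+(j:ℝ)))) := by
    rw [div_mul_div_comm, ← hab]; ring
  have e2 : (n:ℝ)^c * ↑n.factorial / (∏ j ∈ Finset.range (n+1), (c+(j:ℝ))) *
      ((n:ℝ)^d * ↑n.factorial / (∏ j ∈ Finset.range (n+1), (d+(j:ℝ))))
      = (n:ℝ)^c * (n:ℝ)^d * (↑n.factorial)^2 /
        ((∏ j ∈ Finset.range (n+1), (c+(j:ℝ))) * (∏ j ∈ Finset.range (n+1), (d+(j:ℝ)))) := by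
    rw [div_mul_div_comm]; ring
  rw [e1, e2]
  field_simp

lemma QQ_tendsto (N : ℕ) (hN : 2 ≤ N) {s : ℝ} (hs : s ∈ Ioo (0:ℝ) 1) {τ : ℝ}
    (hτ : τ ∈ Ioo (-(N:ℝ)) (2*s)) :
    Tendsto (fun n => QQ N s n τ) atTop (𝓝 (csFun N s τ)) := by
  obtain ⟨hs0, hs1⟩ := hs
  obtain ⟨hτ1, hτ2⟩ := hτ
  have hN2 : (2:ℝ) ≤ N := by exact_mod_cast hN
  set a := ((N:ℝ) + τ)/2 with ha_def
  set b := (2*s - τ)/2 with hb_def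
  set c := -τ/2 with hc_def
  set d := ((N:ℝ) - 2*s + τ)/2 with hd_def
  have hfacB : ∀ j : ℕ, BB N s j - vv N s τ^2 = (c+j)*(d+j) := by
    intro j; unfold BB pp vv; rw [hc_def, hd_def]; ring
  have hfacA : ∀ j : ℕ, AA N s j - vv N s τ^2 = (a+j)*(b+j) := by
    intro j; unfold AA pp vv; rw [ha_def, hb_def]; ring
  have hapos : 0 < a := by rw [ha_def]; linarith
  have hbpos : 0 < b := by rw [hb_def]; linarith
  have hcgt : -s < c := by rw [hc_def]; linarith
  have hdgt : -s < d := by rw [hd_def]; linarith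
  by_cases hcd : c = 0 ∨ d = 0
  · have hval : csFun N s τ = 0 := by
      unfold csFun
      rcases hcd with h | h
      · rw [show -τ/2 = c from hc_def.symm, h, Real.Gamma_zero, zero_mul, div_zero]
      · rw [show ((N:ℝ) - 2*s + τ)/2 = d from hd_def.symm, h, Real.Gamma_zero, mul_zero, div_zero]
    have hQ : ∀ n, QQ N s n τ = 0 := by
      intro n
      unfold QQ
      have h0 : (BB N s 0 - vv N s τ^2) / (AA N s 0 - vv N s τ^2) = 0 := by
        rw [hfacB 0]
        rcases hcd with h | h
        · rw [show c + ((0:ℕ):ℝ) = c by simp, h, zero_mul, zero_div]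
        · rw [show d + ((0:ℕ):ℝ) = d by simp, h, mul_zero, zero_div]
      rw [Finset.prod_eq_zero (Finset.mem_range.mpr (Nat.succ_pos n)) h0, mul_zero]
    rw [hval]
    simp only [hQ]
    exact tendsto_const_nhds
  · push_neg at hcd
    obtain ⟨hc0, hd0⟩ := hcd
    have hcj : ∀ j : ℕ, c + (j:ℝ) ≠ 0 := by
      intro j
      rcases Nat.eq_zero_or_pos j with h | h
      · subst h; simpa using hc0
      · have h1 : (1:ℝ) ≤ (j:ℝ) := by exact_mod_cast h
        have : 0 < c + (j:ℝ) := by linarith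
        exact this.ne'
    have hdj : ∀ j : ℕ, d + (j:ℝ) ≠ 0 := by
      intro j
      rcases Nat.eq_zero_or_pos j with h | h
      · subst h; simpa using hd0
      · have h1 : (1:ℝ) ≤ (j:ℝ) := by exact_mod_cast h
        have : 0 < d + (j:ℝ) := by linarith
        exact this.ne'
    have haj : ∀ j : ℕ, a + (j:ℝ) ≠ 0 := by
      intro j
      have h1 : (0:ℝ) ≤ (j:ℝ) := Nat.cast_nonneg j
      have : 0 < a + (j:ℝ) := by linarith
      exact this.ne'
    have hbj : ∀ j : ℕ, b + (j:ℝ) ≠ 0 := by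
      intro j
      have h1 : (0:ℝ) ≤ (j:ℝ) := Nat.cast_nonneg j
      have : 0 < b + (j:ℝ) := by linarith
      exact this.ne'
    have hsum : a + b = c + d + 2*s := by
      rw [ha_def, hb_def, hc_def, hd_def]; ring
    have heq : ∀ n : ℕ, 1 ≤ n → QQ N s n τ =
        2^(2*s) * ((Real.GammaSeq a n * Real.GammaSeq b n) /
          (Real.GammaSeq c n * Real.GammaSeq d n)) := by
      intro n hn
      unfold QQ
      rw [Finset.prod_congr rfl (fun j _ => by rw [hfacB j, hfacA j] :
        ∀ j ∈ Finset.range (n+1), (BB N s j - vv N s τ^2)/(AA N s j - vv N s τ^2)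
          = ((c+j)*(d+j))/((a+j)*(b+j)))]
      rw [mul_assoc, prod_ratio_eq s a b c d hsum n hn (fun j _ => haj j)
        (fun j _ => hbj j) (fun j _ => hcj j) (fun j _ => hdj j)]
    have hΓc : Real.Gamma c ≠ 0 := by
      refine Real.Gamma_ne_zero fun m => ?_
      rcases Nat.eq_zero_or_pos m with h | h
      · subst h; simpa using hc0
      · have h1 : (1:ℝ) ≤ (m:ℝ) := by exact_mod_cast h
        have : -(m:ℝ) < c := by linarith
        exact this.ne'
    have hΓd : Real.Gamma d ≠ 0 := by
      refine Real.Gamma_ne_zero fun m => ?_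
      rcases Nat.eq_zero_or_pos m with h | h
      · subst h; simpa using hd0
      · have h1 : (1:ℝ) ≤ (m:ℝ) := by exact_mod_cast h
        have : -(m:ℝ) < d := by linarith
        exact this.ne'
    have hden : Real.Gamma c * Real.Gamma d ≠ 0 := mul_ne_zero hΓc hΓd
    have htend : Tendsto (fun n => 2^(2*s) * ((Real.GammaSeq a n * Real.GammaSeq b n) /
        (Real.GammaSeq c n * Real.GammaSeq d n))) atTop
        (𝓝 (2^(2*s) * ((Real.Gamma a * Real.Gamma b) / (Real.Gamma c * Real.Gamma d)))) :=
      tendsto_const_nhds.mul (((Real.GammaSeq_tendsto_Gamma a).mul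
        (Real.GammaSeq_tendsto_Gamma b)).div ((Real.GammaSeq_tendsto_Gamma c).mul
        (Real.GammaSeq_tendsto_Gamma d)) hden)
    have hval : csFun N s τ = 2^(2*s) * ((Real.Gamma a * Real.Gamma b) /
        (Real.Gamma c * Real.Gamma d)) := by
      unfold csFun
      ring
    rw [hval]
    refine htend.congr' ?_
    filter_upwards [eventually_ge_atTop 1] with n hn
    exact (heq n hn).symm

lemma erase_zero_prod (f : ℕ → ℝ) (n : ℕ) :
    ∏ j ∈ (Finset.range (n+1)).erase 0, f j = ∏ i ∈ Finset.range n, f (i+1) := by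
  induction n with
  | zero => simp
  | succ n ih =>
      rw [show Finset.range (n+1+1) = insert (n+1) (Finset.range (n+1)) from Finset.range_add_one,
        Finset.erase_insert_of_ne (Nat.succ_ne_zero n),
        Finset.prod_insert (by simp), ih, Finset.prod_range_succ]
      ring

lemma tendsto_linear_ratio (e e' : ℝ) :
    Tendsto (fun n : ℕ => (e + (n:ℝ))/(e' + (n:ℝ))) atTop (𝓝 1) := by
  have hd : Tendsto (fun n : ℕ => e' + (n:ℝ)) atTop atTop :=
    tendsto_atTop_add_const_left _ e' tendsto_natCast_atTop_atTop
  have h1 : Tendsto (fun n : ℕ => 1 + (e - e') * (e' + (n:ℝ))⁻¹) atTop (𝓝 (1 + (e - e') * 0)) :=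
    tendsto_const_nhds.add (tendsto_const_nhds.mul (tendsto_inv_atTop_zero.comp hd))
  rw [show (1:ℝ) + (e - e') * 0 = 1 by ring] at h1
  refine h1.congr' ?_
  filter_upwards [hd.eventually_gt_atTop 0] with n hn
  field_simp
  ring


lemma lam_tendsto (N : ℕ) (hN : 2 ≤ N) {s : ℝ} (hs : s ∈ Ioo (0:ℝ) 1) :
    ∃ L : ℝ, L < 0 ∧ Tendsto (fun n : ℕ => 2^(2*s) * (n:ℝ)^(2*s) * rho (AA N s) (BB N s) n 0)
      atTop (𝓝 L) := by
  obtain ⟨hs0, hs1⟩ := hs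
  have hN2 : (2:ℝ) ≤ N := by exact_mod_cast hN
  have hP : 0 < pp N s := by unfold pp; linarith
  set P := pp N s with hPdef
  set x₁ := 1 - s with hx1
  set x₂ := 2*P + s + 1 with hx2
  set y₂ := 2*P + 2*s + 1 with hy2
  have hx1p : 0 < x₁ := by rw [hx1]; linarith
  have hx2p : 0 < x₂ := by rw [hx2]; linarith
  have hy2p : 0 < y₂ := by rw [hy2]; linarith
  have hsum : (1:ℝ) + y₂ = x₁ + x₂ + 2*s := by rw [hy2, hx1, hx2]; ring
  set L : ℝ := 2^(2*s) * (BB N s 0 - AA N s 0) *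
      ((Real.Gamma 1 * Real.Gamma y₂) / (Real.Gamma x₁ * Real.Gamma x₂)) with hL
  have hBA : BB N s 0 - AA N s 0 < 0 := by
    unfold BB AA
    rw [← hPdef]
    push_cast
    nlinarith
  refine ⟨L, ?_, ?_⟩
  · rw [hL]
    have h1 : 0 < Real.Gamma 1 := Real.Gamma_pos_of_pos one_pos
    have h2 : 0 < Real.Gamma y₂ := Real.Gamma_pos_of_pos hy2p
    have h3 : 0 < Real.Gamma x₁ := Real.Gamma_pos_of_pos hx1p
    have h4 : 0 < Real.Gamma x₂ := Real.Gamma_pos_of_pos hx2p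
    have h5 : (0:ℝ) < 2^(2*s) := by positivity
    have h6 : 0 < (Real.Gamma 1 * Real.Gamma y₂) / (Real.Gamma x₁ * Real.Gamma x₂) := by
      positivity
    exact mul_neg_of_neg_of_pos (mul_neg_of_pos_of_neg h5 hBA) h6
  · -- equality for n ≥ 1
    have heq : ∀ n : ℕ, 1 ≤ n → 2^(2*s) * (n:ℝ)^(2*s) * rho (AA N s) (BB N s) n 0
        = 2^(2*s) * (BB N s 0 - AA N s 0) *
          ((Real.GammaSeq 1 n * Real.GammaSeq y₂ n) / (Real.GammaSeq x₁ n * Real.GammaSeq x₂ n)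
            * (((1+(n:ℝ))/(x₁+n)) * ((y₂+n)/(x₂+n)))) := by
      intro n hn
      unfold rho
      rw [erase_zero_prod]
      have hterm : ∀ i : ℕ, (BB N s (i+1) - AA N s 0) / (AA N s (i+1) - AA N s 0)
          = ((x₁+i)*(x₂+i))/(((1:ℝ)+i)*(y₂+i)) := by
        intro i
        rw [show BB N s (i+1) - AA N s 0 = (x₁+i)*(x₂+i) by
            unfold BB AA; rw [← hPdef, hx1, hx2]; push_cast; ring,
          show AA N s (i+1) - AA N s 0 = ((1:ℝ)+i)*(y₂+i) by
            unfold AA; rw [← hPdef, hy2]; push_cast; ring]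
      rw [Finset.prod_congr rfl (fun i _ => hterm i)]
      -- extend product to range (n+1)
      have h0 : (0:ℝ) ≤ (n:ℝ) := Nat.cast_nonneg n
      have hext : ∏ i ∈ Finset.range n, ((x₁+(i:ℝ))*(x₂+i))/(((1:ℝ)+i)*(y₂+i))
          = (∏ i ∈ Finset.range (n+1), ((x₁+(i:ℝ))*(x₂+i))/(((1:ℝ)+i)*(y₂+i)))
            * ((((1:ℝ)+(n:ℝ))*(y₂+n))/((x₁+n)*(x₂+n))) := by
        rw [Finset.prod_range_succ]
        have hne1 : (x₁+(n:ℝ)) ≠ 0 := by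
          have hpos : (0:ℝ) < x₁+(n:ℝ) := by linarith
          exact hpos.ne'
        have hne2 : (x₂+(n:ℝ)) ≠ 0 := by
          have hpos : (0:ℝ) < x₂+(n:ℝ) := by linarith
          exact hpos.ne'
        have hne3 : ((1:ℝ)+(n:ℝ)) ≠ 0 := by
          have hpos : (0:ℝ) < (1:ℝ)+(n:ℝ) := by linarith
          exact hpos.ne'
        have hne4 : (y₂+(n:ℝ)) ≠ 0 := by
          have hpos : (0:ℝ) < y₂+(n:ℝ) := by linarith
          exact hpos.ne'
        field_simp
      rw [hext]
      have harg1 : ∀ j ∈ Finset.range (n+1), (1:ℝ) + (j:ℝ) ≠ 0 := by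
        intro j _; have hj : (0:ℝ) ≤ (j:ℝ) := Nat.cast_nonneg j
        exact (show (0:ℝ) < 1 + (j:ℝ) by linarith).ne'
      have harg2 : ∀ j ∈ Finset.range (n+1), y₂ + (j:ℝ) ≠ 0 := by
        intro j _; have hj : (0:ℝ) ≤ (j:ℝ) := Nat.cast_nonneg j
        exact (show (0:ℝ) < y₂ + (j:ℝ) by linarith).ne'
      have harg3 : ∀ j ∈ Finset.range (n+1), x₁ + (j:ℝ) ≠ 0 := by
        intro j _; have hj : (0:ℝ) ≤ (j:ℝ) := Nat.cast_nonneg j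
        exact (show (0:ℝ) < x₁ + (j:ℝ) by linarith).ne'
      have harg4 : ∀ j ∈ Finset.range (n+1), x₂ + (j:ℝ) ≠ 0 := by
        intro j _; have hj : (0:ℝ) ≤ (j:ℝ) := Nat.cast_nonneg j
        exact (show (0:ℝ) < x₂ + (j:ℝ) by linarith).ne'
      have hPR := prod_ratio_eq s 1 y₂ x₁ x₂ hsum n hn harg1 harg2 harg3 harg4
      rw [← hPR]
      have hne1 : (x₁+(n:ℝ)) ≠ 0 := by
        have hpos : (0:ℝ) < x₁+(n:ℝ) := by linarith
        exact hpos.ne'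
      have hne2 : (x₂+(n:ℝ)) ≠ 0 := by
        have hpos : (0:ℝ) < x₂+(n:ℝ) := by linarith
        exact hpos.ne'
      have hne3 : ((1:ℝ)+(n:ℝ)) ≠ 0 := by
        have hpos : (0:ℝ) < (1:ℝ)+(n:ℝ) := by linarith
        exact hpos.ne'
      have hne4 : (y₂+(n:ℝ)) ≠ 0 := by
        have hpos : (0:ℝ) < y₂+(n:ℝ) := by linarith
        exact hpos.ne'
      field_simp
    have hΓx : Real.Gamma x₁ * Real.Gamma x₂ ≠ 0 :=
      mul_ne_zero (Real.Gamma_pos_of_pos hx1p).ne' (Real.Gamma_pos_of_pos hx2p).ne'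
    have hG : Tendsto (fun n : ℕ => (Real.GammaSeq 1 n * Real.GammaSeq y₂ n) /
        (Real.GammaSeq x₁ n * Real.GammaSeq x₂ n)) atTop
        (𝓝 ((Real.Gamma 1 * Real.Gamma y₂) / (Real.Gamma x₁ * Real.Gamma x₂))) :=
      ((Real.GammaSeq_tendsto_Gamma 1).mul (Real.GammaSeq_tendsto_Gamma y₂)).div
        ((Real.GammaSeq_tendsto_Gamma x₁).mul (Real.GammaSeq_tendsto_Gamma x₂)) hΓx
    have hc1 := tendsto_linear_ratio 1 x₁
    have hc2 := tendsto_linear_ratio y₂ x₂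
    have htot := (tendsto_const_nhds (x := 2^(2*s) * (BB N s 0 - AA N s 0))
      (f := atTop (α := ℕ))).mul (hG.mul (hc1.mul hc2))
    rw [show 2^(2*s) * (BB N s 0 - AA N s 0) *
        ((Real.Gamma 1 * Real.Gamma y₂) / (Real.Gamma x₁ * Real.Gamma x₂) * (1*1)) = L by
      rw [hL]; ring] at htot
    refine htot.congr' ?_
    filter_upwards [eventually_ge_atTop 1] with n hn
    exact (heq n hn).symm

lemma csFun_symm (N : ℕ) (s τ : ℝ) : csFun N s τ = csFun N s (2*s - N - τ) := by
  unfold csFun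
  rw [show ((N:ℝ) + (2*s - N - τ))/2 = (2*s - τ)/2 by ring,
    show (2*s - (2*s - (N:ℝ) - τ))/2 = ((N:ℝ) + τ)/2 by ring,
    show -(2*s - (N:ℝ) - τ)/2 = ((N:ℝ) - 2*s + τ)/2 by ring,
    show ((N:ℝ) - 2*s + (2*s - N - τ))/2 = -τ/2 by ring]
  ring

lemma csFun_mid (N : ℕ) (s : ℝ) : csFun N s ((2*s - N)/2) =
    2 ^ (2*s) * Real.Gamma ((N + 2*s)/4) ^ 2 / Real.Gamma ((N - 2*s)/4) ^ 2 := by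
  unfold csFun
  rw [show ((N:ℝ) + (2*s - N)/2)/2 = ((N:ℝ)+2*s)/4 by ring,
    show (2*s - (2*s - (N:ℝ))/2)/2 = ((N:ℝ)+2*s)/4 by ring,
    show -((2*s - (N:ℝ))/2)/2 = ((N:ℝ)-2*s)/4 by ring,
    show ((N:ℝ) - 2*s + (2*s - N)/2)/2 = ((N:ℝ)-2*s)/4 by ring]
  ring

lemma tendsto_Gamma_zero_pos : Tendsto Real.Gamma (𝓝[>] (0:ℝ)) atTop := by
  have h1 : Tendsto (fun x : ℝ => Real.Gamma (x+1)) (𝓝[>] (0:ℝ)) (𝓝 1) := by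
    have hc : ContinuousAt Real.Gamma 1 := by
      refine (Real.differentiableAt_Gamma ?_).continuousAt
      intro m h
      have h0 : (0:ℝ) ≤ m := Nat.cast_nonneg m
      linarith
    have h2 : Tendsto (fun x : ℝ => x + 1) (𝓝[>] (0:ℝ)) (𝓝 (1:ℝ)) := by
      have hcn : Continuous (fun x : ℝ => x + 1) := by continuity
      simpa using (hcn.tendsto (0:ℝ)).mono_left nhdsWithin_le_nhds
    simpa [Real.Gamma_one, Function.comp_def] using (hc.tendsto.comp h2)
  have h2 : Tendsto (fun x : ℝ => x⁻¹) (𝓝[>] (0:ℝ)) atTop := tendsto_inv_nhdsGT_zero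
  have h3 := h1.pos_mul_atTop one_pos h2
  refine h3.congr' ?_
  filter_upwards [self_mem_nhdsWithin] with x hx
  have hx0 : x ≠ 0 := ne_of_gt hx
  rw [Real.Gamma_add_one hx0]
  field_simp

lemma Gamma_neg_of_neg_one {x : ℝ} (h1 : -1 < x) (h2 : x < 0) : Real.Gamma x < 0 := by
  have hg : Real.Gamma (x+1) = x * Real.Gamma x := Real.Gamma_add_one (ne_of_lt h2)
  have hp : 0 < Real.Gamma (x+1) := Real.Gamma_pos_of_pos (by linarith)
  nlinarith [hp, hg]

lemma csFun_tendsto_left (N : ℕ) (hN : 2 ≤ N) {s : ℝ} (hs : s ∈ Ioo (0:ℝ) 1) :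
    Tendsto (csFun N s) (𝓝[>] (-(N:ℝ))) atBot := by
  obtain ⟨hs0, hs1⟩ := hs
  have hN2 : (2:ℝ) ≤ N := by exact_mod_cast hN
  have hmap : Tendsto (fun τ : ℝ => ((N:ℝ)+τ)/2) (𝓝[>] (-(N:ℝ))) (𝓝[>] (0:ℝ)) := by
    refine tendsto_nhdsWithin_of_tendsto_nhds_of_eventually_within _ ?_ ?_
    · have hcn : Continuous (fun τ : ℝ => ((N:ℝ)+τ)/2) := by continuity
      have h := (hcn.tendsto (-(N:ℝ))).mono_left (nhdsWithin_le_nhds (s := Ioi (-(N:ℝ))))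
      convert h using 2
      ring
    · filter_upwards [self_mem_nhdsWithin] with τ hτ
      have h' : -(N:ℝ) < τ := hτ
      exact mem_Ioi.mpr (div_pos (by linarith) two_pos)
  have h1 : Tendsto (fun τ : ℝ => Real.Gamma (((N:ℝ)+τ)/2)) (𝓝[>] (-(N:ℝ))) atTop :=
    tendsto_Gamma_zero_pos.comp hmap
  set c : ℝ := 2 ^ (2*s) * Real.Gamma ((2*s + N)/2) / (Real.Gamma (N/2) * Real.Gamma (-s)) with hc
  have hΓs : Real.Gamma (-s) < 0 := Gamma_neg_of_neg_one (by linarith) (by linarith)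
  have hΓN2 : 0 < Real.Gamma ((N:ℝ)/2) := Real.Gamma_pos_of_pos (by linarith)
  have hcneg : c < 0 := by
    apply div_neg_of_pos_of_neg
    · positivity
    · exact mul_neg_of_pos_of_neg hΓN2 hΓs
  have hcont : ∀ (y : ℝ), (∀ m : ℕ, y ≠ -(m:ℝ)) → ContinuousAt Real.Gamma y := fun y hy =>
    (Real.differentiableAt_Gamma hy).continuousAt
  have hb : Tendsto (fun τ : ℝ => Real.Gamma ((2*s - τ)/2)) (𝓝[>] (-(N:ℝ)))
      (𝓝 (Real.Gamma ((2*s + N)/2))) := by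
    have hcm : ContinuousAt Real.Gamma ((2*s + N)/2) := by
      refine hcont _ fun m h => ?_
      have h0 : (0:ℝ) ≤ m := Nat.cast_nonneg m
      linarith
    refine hcm.tendsto.comp ?_
    have hcn : Continuous (fun τ : ℝ => (2*s - τ)/2) := by continuity
    have h := (hcn.tendsto (-(N:ℝ))).mono_left (nhdsWithin_le_nhds (s := Ioi (-(N:ℝ))))
    convert h using 2
    ring
  have hcden : Tendsto (fun τ : ℝ => Real.Gamma (-τ/2)) (𝓝[>] (-(N:ℝ)))
      (𝓝 (Real.Gamma ((N:ℝ)/2))) := by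
    have hcm : ContinuousAt Real.Gamma ((N:ℝ)/2) := by
      refine hcont _ fun m h => ?_
      have h0 : (0:ℝ) ≤ m := Nat.cast_nonneg m
      linarith
    refine hcm.tendsto.comp ?_
    have hcn : Continuous (fun τ : ℝ => -τ/2) := by continuity
    have h := (hcn.tendsto (-(N:ℝ))).mono_left (nhdsWithin_le_nhds (s := Ioi (-(N:ℝ))))
    convert h using 2
    ring
  have hdden : Tendsto (fun τ : ℝ => Real.Gamma (((N:ℝ) - 2*s + τ)/2)) (𝓝[>] (-(N:ℝ)))
      (𝓝 (Real.Gamma (-s))) := by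
    have hcm : ContinuousAt Real.Gamma (-s) := by
      refine hcont _ fun m h => ?_
      rcases Nat.eq_zero_or_pos m with hm | hm
      · rw [hm] at h; simp at h; linarith
      · have h1m : (1:ℝ) ≤ m := by exact_mod_cast hm
        linarith
    refine hcm.tendsto.comp ?_
    have hcn : Continuous (fun τ : ℝ => ((N:ℝ) - 2*s + τ)/2) := by continuity
    have h := (hcn.tendsto (-(N:ℝ))).mono_left (nhdsWithin_le_nhds (s := Ioi (-(N:ℝ))))
    convert h using 2
    ring
  have h2 : Tendsto (fun τ : ℝ => 2 ^ (2*s) * Real.Gamma ((2*s - τ)/2) /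
      (Real.Gamma (-τ/2) * Real.Gamma (((N:ℝ) - 2*s + τ)/2))) (𝓝[>] (-(N:ℝ))) (𝓝 c) := by
    rw [hc]
    exact (tendsto_const_nhds.mul hb).div (hcden.mul hdden)
      (mul_neg_of_pos_of_neg hΓN2 hΓs).ne
  have h3 := h1.atTop_mul_neg hcneg h2
  refine h3.congr ?_
  intro τ
  unfold csFun
  ring


lemma concaveOn_sum' {I : Set ℝ} (hI : Convex ℝ I) (t : Finset ℕ) (f : ℕ → ℝ → ℝ)
    (h : ∀ i ∈ t, ConcaveOn ℝ I (f i)) : ConcaveOn ℝ I (fun x => ∑ i ∈ t, f i x) := by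
  classical
  induction t using Finset.induction with
  | empty => simpa using concaveOn_const 0 hI
  | insert _ _ hni ih =>
      rename_i a tt
      simp only [Finset.sum_insert hni]
      exact (h a (Finset.mem_insert_self a tt)).add
        (ih fun i hi => h i (Finset.mem_insert_of_mem hi))

lemma concaveOn_nonpos_smul {I : Set ℝ} {f : ℝ → ℝ} {c : ℝ} (hc : c ≤ 0)
    (hf : ConvexOn ℝ I f) : ConcaveOn ℝ I (fun x => c * f x) := by
  have h1 := (hf.smul (c := -c) (by linarith)).neg
  refine concaveOn_congr' h1 fun x _ => ?_
  simp only [Pi.neg_apply, smul_eq_mul]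
  ring

lemma concaveOn_pos_mul {I : Set ℝ} {f : ℝ → ℝ} {c : ℝ} (hc : 0 ≤ c)
    (hf : ConcaveOn ℝ I f) : ConcaveOn ℝ I (fun x => c * f x) := by
  have h1 := hf.smul (c := c) hc
  refine concaveOn_congr' h1 fun x _ => ?_
  simp only [smul_eq_mul]

lemma strictConcaveOn_congr' {I : Set ℝ} {f g : ℝ → ℝ} (hf : StrictConcaveOn ℝ I f)
    (h : ∀ x ∈ I, f x = g x) : StrictConcaveOn ℝ I g := by
  refine ⟨hf.1, fun x hx y hy hxy a b ha hb hab => ?_⟩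
  rw [← h x hx, ← h y hy, ← h _ (hf.1 hx hy ha.le hb.le hab)]
  exact hf.2 hx hy hxy ha hb hab

lemma concaveOn_of_tendsto {I : Set ℝ} (hI : Convex ℝ I) {F : ℕ → ℝ → ℝ} {f : ℝ → ℝ}
    (hF : ∀ n, ConcaveOn ℝ I (F n)) (hlim : ∀ x ∈ I, Tendsto (fun n => F n x) atTop (𝓝 (f x))) :
    ConcaveOn ℝ I f := by
  refine ⟨hI, fun x hx y hy a b ha hb hab => ?_⟩
  have hmem := hI hx hy ha hb hab
  have h1 : Tendsto (fun n => a * F n x + b * F n y) atTop (𝓝 (a * f x + b * f y)) :=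
    ((hlim x hx).const_mul a).add ((hlim y hy).const_mul b)
  have h2 := hlim _ hmem
  have hle : ∀ n, a * F n x + b * F n y ≤ F n (a•x+b•y) := fun n => by
    have := (hF n).2 hx hy ha hb hab
    simpa [smul_eq_mul] using this
  have := le_of_tendsto_of_tendsto' h1 h2 hle
  simpa [smul_eq_mul] using this

lemma csFun_strictConcave (N : ℕ) (hN : 2 ≤ N) {s : ℝ} (hs : s ∈ Ioo (0:ℝ) 1) :
    StrictConcaveOn ℝ (Ioo (-(N:ℝ)) (2*s)) (csFun N s) := by
  obtain ⟨hs0, hs1⟩ := hs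
  have hN2 : (2:ℝ) ≤ N := by exact_mod_cast hN
  set I := Ioo (-(N:ℝ)) (2*s) with hIdef
  have hI : Convex ℝ I := convex_Ioo _ _
  have hp : 0 < pp N s := by unfold pp; linarith
  set r : ℝ := pp N s + s with hrdef
  have hr : 0 < r := by rw [hrdef]; linarith
  set d : ℝ := (2*s - (N:ℝ))/2 with hddef
  have hv : ∀ τ ∈ I, |(τ - d)/2| < r := by
    intro τ hτ
    obtain ⟨h1, h2⟩ := hτ
    rw [abs_lt, hddef, hrdef]
    unfold pp
    constructor <;> [linarith; linarith]
  -- the sequences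
  have hAmono : StrictMono (AA N s) := by
    intro k l hkl
    unfold AA
    have hkl' : pp N s + s + (k:ℝ) < pp N s + s + (l:ℝ) := by
      have : (k:ℝ) < l := by exact_mod_cast hkl
      linarith
    have hpos : 0 ≤ pp N s + s + (k:ℝ) := by
      have : (0:ℝ) ≤ (k:ℝ) := Nat.cast_nonneg k
      linarith
    exact pow_lt_pow_left₀ hkl' hpos (two_ne_zero)
  have hBA : ∀ j, BB N s j < AA N s j := by
    intro j
    unfold AA BB
    have h0 : (0:ℝ) ≤ (j:ℝ) := Nat.cast_nonneg j
    nlinarith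
  have hAB : ∀ j, AA N s j < BB N s (j+1) := by
    intro j
    unfold AA BB
    have h0 : (0:ℝ) ≤ (j:ℝ) := Nat.cast_nonneg j
    push_cast
    nlinarith
  -- u(τ) = vv² is below AA k and ≠ AA k on I
  have hu : ∀ τ ∈ I, ∀ k : ℕ, vv N s τ^2 < AA N s k := by
    intro τ hτ k
    have h1 := hv τ hτ
    have h2 : |vv N s τ| < r := by
      unfold vv; rw [← hddef]; exact h1
    rw [abs_lt] at h2
    have h3 : vv N s τ^2 < r^2 := by nlinarith
    have h4 : r^2 ≤ AA N s k := by
      unfold AA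
      rw [hrdef]
      have h0 : (0:ℝ) ≤ (k:ℝ) := Nat.cast_nonneg k
      nlinarith
    linarith
  -- g k convexity
  have hgconv : ∀ k : ℕ, ConvexOn ℝ I (fun τ => (AA N s k - vv N s τ^2)⁻¹) := by
    intro k
    have ha : r ≤ pp N s + s + (k:ℝ) := by
      rw [hrdef]
      have h0 : (0:ℝ) ≤ (k:ℝ) := Nat.cast_nonneg k
      linarith
    have := convexOn_invquad hI d r (pp N s + s + (k:ℝ)) hr ha hv
    refine convexOn_congr' this fun x hx => ?_
    unfold AA vv
    rw [← hddef]
  have hgstrict : StrictConvexOn ℝ I (fun τ => (AA N s 0 - vv N s τ^2)⁻¹) := by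
    have ha : r ≤ pp N s + s + ((0:ℕ):ℝ) := by
      rw [hrdef]; simp
    have := strictConvexOn_invquad hI d r (pp N s + s + ((0:ℕ):ℝ)) hr ha hv
    refine strictConvexOn_congr' this fun x hx => ?_
    unfold AA vv
    rw [← hddef]
  -- the limit of the coefficients
  obtain ⟨L, hLneg, hLtend⟩ := lam_tendsto N hN ⟨hs0, hs1⟩
  -- concave approximants
  set RR : ℕ → ℝ → ℝ := fun n τ => 2^(2*s) * (n:ℝ)^(2*s) *
      (1 + ∑ k ∈ (Finset.range (n+1)).erase 0,
        rho (AA N s) (BB N s) n k * (AA N s k - vv N s τ^2)⁻¹) with hRRdef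
  have hRRconc : ∀ n, ConcaveOn ℝ I (RR n) := by
    intro n
    rw [hRRdef]
    have hsum : ConcaveOn ℝ I (fun τ => ∑ k ∈ (Finset.range (n+1)).erase 0,
        rho (AA N s) (BB N s) n k * (AA N s k - vv N s τ^2)⁻¹) := by
      refine concaveOn_sum' hI _ _ fun k _ => ?_
      exact concaveOn_nonpos_smul (le_of_lt (rho_neg (AA N s) (BB N s) hAmono hBA hAB)) (hgconv k)
    have hone := (concaveOn_const (1:ℝ) hI).add hsum
    have := concaveOn_pos_mul (c := 2^(2*s) * (n:ℝ)^(2*s)) (by positivity) hone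
    refine concaveOn_congr' this fun x hx => ?_
    simp only [Pi.add_apply]
    try ring
  -- identity  RR n τ = QQ n τ - λ_n * g₀ τ on I
  have hRReq : ∀ n : ℕ, ∀ τ ∈ I, RR n τ = QQ N s n τ -
      (2^(2*s) * (n:ℝ)^(2*s) * rho (AA N s) (BB N s) n 0) * (AA N s 0 - vv N s τ^2)⁻¹ := by
    intro n τ hτ
    have hune : ∀ j ∈ Finset.range (n+1), vv N s τ^2 ≠ AA N s j :=
      fun j _ => (hu τ hτ j).ne
    have hPF := partial_fraction (AA N s) (BB N s) hAmono hBA hAB n (vv N s τ^2) hune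
    rw [hRRdef]
    unfold QQ
    rw [hPF]
    rw [← Finset.add_sum_erase _ (fun k => rho (AA N s) (BB N s) n k / (AA N s k - vv N s τ^2))
      (Finset.mem_range.mpr (Nat.succ_pos n))]
    simp only [div_eq_mul_inv]
    ring
  -- concavity of csFun - L g₀
  have hconc2 : ConcaveOn ℝ I (fun τ => csFun N s τ - L * (AA N s 0 - vv N s τ^2)⁻¹) := by
    refine concaveOn_of_tendsto hI hRRconc fun τ hτ => ?_
    have h1 := QQ_tendsto N hN ⟨hs0, hs1⟩ hτ
    have h2 := hLtend.mul_const ((AA N s 0 - vv N s τ^2)⁻¹)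
    have h3 := h1.sub h2
    refine h3.congr fun n => ?_
    exact (hRReq n τ hτ).symm
  -- strict concavity of L g₀
  have hstrict : StrictConcaveOn ℝ I (fun τ => L * (AA N s 0 - vv N s τ^2)⁻¹) := by
    have h1 := strictConvexOn_smul_pos (c := -L) (by linarith) hgstrict
    have h2 := h1.neg
    refine strictConcaveOn_congr' h2 fun x _ => ?_
    simp only [Pi.neg_apply]
    ring
  have := hconc2.add_strictConcaveOn hstrict
  refine strictConcaveOn_congr' this fun x _ => ?_
  simp only [Pi.add_apply]
  ring

lemma csFun_max (N : ℕ) (hN : 2 ≤ N) {s : ℝ} (hs : s ∈ Ioo (0:ℝ) 1) :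
    ∀ τ ∈ Ioo (-(N:ℝ)) (2*s), τ ≠ (2*s - N)/2 →
      csFun N s τ < csFun N s ((2*s - N)/2) := by
  intro τ hτ hne
  obtain ⟨h1, h2⟩ := hτ
  have hN2 : (2:ℝ) ≤ N := by exact_mod_cast hN
  have hSC := csFun_strictConcave N hN hs
  have hτ' : (2*s - (N:ℝ) - τ) ∈ Ioo (-(N:ℝ)) (2*s) := by
    constructor <;> [linarith; linarith]
  have hne' : τ ≠ 2*s - (N:ℝ) - τ := by
    intro h
    apply hne
    linarith
  have := hSC.2 (Set.mem_Ioo.mpr ⟨h1, h2⟩) hτ' hne'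
    (by norm_num : (0:ℝ) < 1/2) (by norm_num : (0:ℝ) < 1/2) (by norm_num : (1:ℝ)/2 + 1/2 = 1)
  rw [smul_eq_mul, smul_eq_mul, smul_eq_mul, smul_eq_mul] at this
  rw [show (1/2 : ℝ) * τ + 1/2 * (2*s - (N:ℝ) - τ) = (2*s - N)/2 by ring] at this
  have hsym := csFun_symm N s τ
  linarith [this, hsym.le]

lemma csFun_tendsto_right (N : ℕ) (hN : 2 ≤ N) {s : ℝ} (hs : s ∈ Ioo (0:ℝ) 1) :
    Tendsto (csFun N s) (𝓝[<] (2*s)) atBot := by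
  have hmap : Tendsto (fun τ : ℝ => 2*s - (N:ℝ) - τ) (𝓝[<] (2*s)) (𝓝[>] (-(N:ℝ))) := by
    refine tendsto_nhdsWithin_of_tendsto_nhds_of_eventually_within _ ?_ ?_
    · have hcn : Continuous (fun τ : ℝ => 2*s - (N:ℝ) - τ) := by continuity
      have h := (hcn.tendsto (2*s)).mono_left (nhdsWithin_le_nhds (s := Iio (2*s)))
      convert h using 2
      ring
    · filter_upwards [self_mem_nhdsWithin] with τ hτ
      have h' : τ < 2*s := hτ
      exact mem_Ioi.mpr (by linarith)
  have := (csFun_tendsto_left N hN hs).comp hmap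
  refine this.congr fun τ => ?_
  exact (csFun_symm N s τ).symm

end CsAux

/-- Lemma 2.3: properties of the function `c_s`: strict concavity on
`(-N, 2s)`, symmetry about `(2s-N)/2`, unique maximum at `(2s-N)/2` with value
`2^{2s} Γ((N+2s)/4)² / Γ((N-2s)/4)²`, and divergence to `-∞` at both endpoints. -/
theorem csFun_properties
    (N : ℕ) (hN : 2 ≤ N) (s : ℝ) (hs : s ∈ Ioo (0:ℝ) 1) :
    StrictConcaveOn ℝ (Ioo (-(N:ℝ)) (2*s)) (csFun N s) ∧
    (∀ τ ∈ Ioo (-(N:ℝ)) (2*s), csFun N s τ = csFun N s (2*s - N - τ)) ∧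
    csFun N s ((2*s - N)/2) =
      2 ^ (2*s) * Real.Gamma ((N + 2*s)/4) ^ 2 / Real.Gamma ((N - 2*s)/4) ^ 2 ∧
    (∀ τ ∈ Ioo (-(N:ℝ)) (2*s), τ ≠ (2*s - N)/2 →
      csFun N s τ < csFun N s ((2*s - N)/2)) ∧
    Tendsto (csFun N s) (𝓝[>] (-(N:ℝ))) atBot ∧
    Tendsto (csFun N s) (𝓝[<] (2*s)) atBot :=
  ⟨CsAux.csFun_strictConcave N hN hs, fun τ _ => CsAux.csFun_symm N s τ, CsAux.csFun_mid N s,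
    CsAux.csFun_max N hN hs, CsAux.csFun_tendsto_left N hN hs,
    CsAux.csFun_tendsto_right N hN hs⟩
end
end

section
/- Let N ≥ 2, s ∈ (0,1), and let Ω ⊂ ℝ^N be a bounded domain. (a) If u ∈ W^s(Ω), then u⁺ = max(u,0) and u⁻ = max(−u,0) belong to W^s(Ω). (b) If u ∈ W^s(Ω) satisfies u ≡ 0 on ℝ^N∖Ω, then u ∈ H^s_0(Ω). (c) If u ∈ W^s(Ω) satisfies u ≥ 0 a.e. on ℝ^N∖Ω, then u⁻ ∈ H^s_0(Ω) and E^s(u⁻,u⁻) ≤ −E^s(u,u⁻). -/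
open MeasureTheory Filter Set Topology Metric

noncomputable section

lemma aux_w_pos {N : ℕ} (q : ℝ) (x : EN N) : 0 < 1 + ‖x‖ ^ q := by positivity

lemma aux_cont_w {N : ℕ} (q : ℝ) (hq : 0 ≤ q) :
    Continuous (fun x : EN N => 1 + ‖x‖ ^ q) :=
  continuous_const.add (continuous_norm.rpow_const fun _ => Or.inr hq)

lemma aux_aemeasurable {N : ℕ} {s : ℝ} (hs : 0 < s) {u : EN N → ℝ}
    (hu : MemL1w N s u) : AEMeasurable u := by
  have hq : (0:ℝ) ≤ (N:ℝ) + 2*s := by positivity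
  have h : AEMeasurable (fun x : EN N => u x / (1 + ‖x‖ ^ ((N:ℝ) + 2*s))) := by
    exact (hu : Integrable _ _).aemeasurable
  have h2 := h.mul (aux_cont_w ((N:ℝ) + 2*s) hq).aemeasurable
  refine h2.congr (Eventually.of_forall fun x => ?_)
  exact div_mul_cancel₀ _ (aux_w_pos _ x).ne'

lemma aux_int_inv_w {N : ℕ} (q : ℝ) (hq : (N:ℝ) < q) :
    Integrable (fun y : EN N => (1 + ‖y‖ ^ q)⁻¹) := by
  have h0 : (0:ℝ) < q := lt_of_le_of_lt (Nat.cast_nonneg N) hq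
  refine ((integrable_one_add_norm (E := EN N) (μ := volume)
      (by rw [finrank_euclideanSpace_fin]; exact hq)).const_mul ((2:ℝ) ^ q)).mono'
    ((aux_cont_w q h0.le).inv₀ fun x => (aux_w_pos q x).ne').aestronglyMeasurable
    (Eventually.of_forall fun x => ?_)
  have hB : (0:ℝ) < 1 + ‖x‖ ^ q := aux_w_pos q x
  have hA : (0:ℝ) < (1 + ‖x‖) ^ q := by positivity
  have hAB : (1 + ‖x‖) ^ q ≤ 2 ^ q * (1 + ‖x‖ ^ q) := by
    rcases le_total (‖x‖) 1 with h|h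
    · calc (1 + ‖x‖) ^ q ≤ (2:ℝ) ^ q := by
            apply Real.rpow_le_rpow (by positivity) (by linarith) h0.le
        _ ≤ 2 ^ q * (1 + ‖x‖ ^ q) := by
            nlinarith [Real.rpow_pos_of_pos (two_pos (α := ℝ)) q,
              Real.rpow_nonneg (norm_nonneg x) q]
    · calc (1 + ‖x‖) ^ q ≤ (2 * ‖x‖) ^ q := by
            apply Real.rpow_le_rpow (by positivity) (by linarith) h0.le
        _ = 2 ^ q * ‖x‖ ^ q := Real.mul_rpow (by norm_num) (norm_nonneg x)
        _ ≤ 2 ^ q * (1 + ‖x‖ ^ q) := by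
            nlinarith [Real.rpow_pos_of_pos (two_pos (α := ℝ)) q]
  rw [Real.norm_eq_abs, abs_of_pos (by positivity), Real.rpow_neg (by positivity)]
  have key : (1 + ‖x‖ ^ q)⁻¹ * ((1 + ‖x‖) ^ q) ≤ 2 ^ q := by
    calc (1 + ‖x‖ ^ q)⁻¹ * ((1 + ‖x‖) ^ q)
        ≤ (1 + ‖x‖ ^ q)⁻¹ * (2 ^ q * (1 + ‖x‖ ^ q)) :=
          mul_le_mul_of_nonneg_left hAB (by positivity)
      _ = 2 ^ q := by field_simp
  calc (1 + ‖x‖ ^ q)⁻¹ = (1 + ‖x‖ ^ q)⁻¹ * ((1 + ‖x‖) ^ q) * ((1 + ‖x‖) ^ q)⁻¹ := by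
        field_simp
    _ ≤ 2 ^ q * ((1 + ‖x‖) ^ q)⁻¹ :=
        mul_le_mul_of_nonneg_right key (by positivity)

lemma aux_dist_bound {N : ℕ} (q δ R : ℝ) (hq : 0 ≤ q) (hδ : 0 < δ) (hR : 0 ≤ R)
    (x y : EN N) (hx : ‖x‖ ≤ R) (hd : δ ≤ dist x y) :
    1 + ‖y‖ ^ q ≤ (δ⁻¹ ^ q + (R/δ + 1) ^ q) * dist x y ^ q := by
  set d := dist x y with hdd
  have hd0 : 0 < d := lt_of_lt_of_le hδ hd
  have h1 : (1:ℝ) ≤ δ⁻¹ ^ q * d ^ q := by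
    have h1a : (1:ℝ) ≤ δ⁻¹ * d := by
      rw [inv_mul_eq_div, le_div_iff₀ hδ]; linarith
    calc (1:ℝ) = (1:ℝ) ^ q := (Real.one_rpow q).symm
      _ ≤ (δ⁻¹ * d) ^ q := Real.rpow_le_rpow zero_le_one h1a hq
      _ = δ⁻¹ ^ q * d ^ q := Real.mul_rpow (by positivity) hd0.le
  have hy : ‖y‖ ≤ R + d := by
    have := norm_sub_norm_le y x
    rw [← dist_eq_norm y x, dist_comm] at this
    linarith
  have h2 : ‖y‖ ^ q ≤ (R/δ + 1) ^ q * d ^ q := by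
    have hstep : ‖y‖ ≤ (R/δ + 1) * d := by
      have : R / δ * δ ≤ R / δ * d := by
        apply mul_le_mul_of_nonneg_left hd (by positivity)
      rw [div_mul_cancel₀ _ hδ.ne'] at this
      nlinarith
    calc ‖y‖ ^ q ≤ ((R/δ + 1) * d) ^ q :=
          Real.rpow_le_rpow (norm_nonneg y) hstep hq
      _ = (R/δ + 1) ^ q * d ^ q := Real.mul_rpow (by positivity) hd0.le
  nlinarith [Real.rpow_nonneg (norm_nonneg y) q]

lemma aux_CNs_pos {N : ℕ} {s : ℝ} (hs : s ∈ Ioo (0:ℝ) 1) : 0 < CNs N s := by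
  have h1 : 0 < Real.Gamma ((N + 2*s)/2) :=
    Real.Gamma_pos_of_pos (by have := hs.1; positivity)
  have h2 : 0 < Real.Gamma (1 - s) := Real.Gamma_pos_of_pos (by linarith [hs.2])
  have h3 : (0:ℝ) < 2 ^ (2*s) := Real.rpow_pos_of_pos two_pos _
  have h4 : (0:ℝ) < Real.pi ^ (-(N:ℝ)/2) := Real.rpow_pos_of_pos Real.pi_pos _
  have := hs.1
  unfold CNs
  positivity

/-- a.e. measurability of the energy integrand on the product space. -/
lemma aux_F_aem {N : ℕ} (q : ℝ) (hq : 0 ≤ q) {u v : EN N → ℝ}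
    (hu : AEMeasurable u) (hv : AEMeasurable v) :
    AEMeasurable (fun p : EN N × EN N =>
      (u p.1 - u p.2) * (v p.1 - v p.2) / dist p.1 p.2 ^ q) := by
  have hd : Continuous (fun p : EN N × EN N => dist p.1 p.2 ^ q) :=
    continuous_dist.rpow_const fun _ => Or.inr hq
  rw [MeasureTheory.Measure.volume_eq_prod]
  exact ((hu.comp_fst.sub hu.comp_snd).mul (hv.comp_fst.sub hv.comp_snd)).div
    (by rw [← MeasureTheory.Measure.volume_eq_prod]; exact hd.aemeasurable : AEMeasurable _ (volume.prod volume))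

lemma aux_ae_prod_fst {N : ℕ} {P : EN N → Prop} (h : ∀ᵐ x : EN N, P x) :
    ∀ᵐ p : EN N × EN N, P p.1 := by
  rw [MeasureTheory.Measure.volume_eq_prod]
  exact Measure.quasiMeasurePreserving_fst.ae h

lemma aux_ae_prod_snd {N : ℕ} {P : EN N → Prop} (h : ∀ᵐ x : EN N, P x) :
    ∀ᵐ p : EN N × EN N, P p.2 := by
  rw [MeasureTheory.Measure.volume_eq_prod]
  exact Measure.quasiMeasurePreserving_snd.ae h

/-- Swap symmetry for integrability on product sets. -/
lemma aux_swap_integrableOn {N : ℕ} {F : EN N × EN N → ℝ}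
    (hsymm : ∀ p : EN N × EN N, F (p.2, p.1) = F p)
    {A B : Set (EN N)} (h : IntegrableOn F (A ×ˢ B)) : IntegrableOn F (B ×ˢ A) := by
  have h1 : Integrable F ((volume.restrict A).prod (volume.restrict B)) := by
    rw [Measure.prod_restrict, ← MeasureTheory.Measure.volume_eq_prod]; exact h
  have h2 := h1.swap
  have h3 : (F ∘ Prod.swap) = F := funext fun p => hsymm p
  rw [h3, Measure.prod_restrict, ← MeasureTheory.Measure.volume_eq_prod] at h2
  exact h2

/-- Integrability from a product bound. -/
lemma aux_prod_integrableOn {N : ℕ} {f g : EN N → ℝ} {A B : Set (EN N)}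
    (hf : IntegrableOn f A) (hg : IntegrableOn g B) :
    IntegrableOn (fun p : EN N × EN N => f p.1 * g p.2) (A ×ˢ B) := by
  have := Integrable.mul_prod (L := ℝ) hf hg
  rw [Measure.prod_restrict, ← MeasureTheory.Measure.volume_eq_prod] at this
  exact this

lemma aux_div_mono {a b c : ℝ} (h : a ≤ b) (hc : 0 ≤ c) : a / c ≤ b / c := by
  rcases hc.eq_or_lt with rfl|h0
  · simp
  · exact div_le_div_of_nonneg_right h h0.le

/-- rewrite the square integrand as a product integrand -/
lemma aux_sq_eq {N : ℕ} (q : ℝ) (v : EN N → ℝ) :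
    (fun p : EN N × EN N => (v p.1 - v p.2)^2 / dist p.1 p.2 ^ q)
      = fun p : EN N × EN N => (v p.1 - v p.2) * (v p.1 - v p.2) / dist p.1 p.2 ^ q := by
  funext p; rw [sq]

/-- Monotonicity of finite energy under pointwise contractions. -/
lemma aux_FE_mono {N : ℕ} {s : ℝ} (hs : 0 < s) {u v : EN N → ℝ} {A B : Set (EN N)}
    (hvm : AEMeasurable v)
    (h2 : ∀ x y : EN N, |v x - v y| ≤ |u x - u y|)
    (hu : FiniteEnergyOn N s u A B) : FiniteEnergyOn N s v A B := by
  have hq : (0:ℝ) ≤ (N:ℝ) + 2*s := by positivity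
  unfold FiniteEnergyOn at hu ⊢
  refine Integrable.mono hu ?_ (ae_of_all _ fun p => ?_)
  · rw [aux_sq_eq]
    exact ((aux_F_aem _ hq hvm hvm).aestronglyMeasurable).restrict
  · have hd : (0:ℝ) ≤ dist p.1 p.2 ^ ((N:ℝ) + 2*s) := Real.rpow_nonneg dist_nonneg _
    rw [Real.norm_eq_abs, Real.norm_eq_abs,
      abs_of_nonneg (div_nonneg (sq_nonneg _) hd), abs_of_nonneg (div_nonneg (sq_nonneg _) hd)]
    refine aux_div_mono ?_ hd
    rw [← sq_abs (v p.1 - v p.2), ← sq_abs (u p.1 - u p.2)]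
    exact pow_le_pow_left₀ (abs_nonneg _) (h2 _ _) 2

lemma aux_memWs_of_contraction {N : ℕ} {s : ℝ} (hs : 0 < s) {Ω : Set (EN N)}
    {u v : EN N → ℝ} (hvm : AEMeasurable v)
    (h1 : ∀ x, |v x| ≤ |u x|) (h2 : ∀ x y, |v x - v y| ≤ |u x - u y|)
    (hu : MemWs N s Ω u) : MemWs N s Ω v := by
  obtain ⟨hu1, hu2, Ω', hΩ'o, hΩ'c, hcl, huE⟩ := hu
  have hq : (0:ℝ) ≤ (N:ℝ) + 2*s := by positivity
  refine ⟨?_, ?_, Ω', hΩ'o, hΩ'c, hcl, aux_FE_mono hs hvm h2 huE⟩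
  · refine (hu1 : Integrable _ _).mono
      ((hvm.div (aux_cont_w _ hq).aemeasurable).aestronglyMeasurable)
      (ae_of_all _ fun x => ?_)
    rw [Real.norm_eq_abs, Real.norm_eq_abs, abs_div, abs_div,
      abs_of_pos (aux_w_pos _ x)]
    exact aux_div_mono (h1 x) (aux_w_pos _ x).le
  · refine Integrable.mono hu2 ?_ (ae_of_all _ fun x => ?_)
    · have : (fun x => (v x)^2) = fun x => v x * v x := by funext x; rw [sq]
      rw [this]
      exact ((hvm.mul hvm).aestronglyMeasurable).restrict
    · rw [Real.norm_eq_abs, Real.norm_eq_abs, abs_of_nonneg (sq_nonneg _),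
        abs_of_nonneg (sq_nonneg _), ← sq_abs (v x), ← sq_abs (u x)]
      exact pow_le_pow_left₀ (abs_nonneg _) (h1 x) 2

set_option maxHeartbeats 1000000 in
/-- Key integrability lemma: the cross energy integrand of `u ∈ W^s(Ω)` against
`v ∈ W^s(Ω)` vanishing a.e. outside `Ω` is integrable on all of `ℝ^N × ℝ^N`. -/
lemma aux_key {N : ℕ} (hN : 2 ≤ N) {s : ℝ} (hs : s ∈ Ioo (0:ℝ) 1)
    {Ω Ω' : Set (EN N)} (hΩo : IsOpen Ω) (hΩb : Bornology.IsBounded Ω)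
    (hΩ'o : IsOpen Ω') (hcl : closure Ω ⊆ Ω')
    {u v : EN N → ℝ}
    (hu1 : MemL1w N s u) (hu2 : IntegrableOn (fun x => (u x)^2) Ω)
    (huE : FiniteEnergyOn N s u Ω Ω')
    (hv1 : MemL1w N s v) (hv2 : IntegrableOn (fun x => (v x)^2) Ω)
    (hvE : FiniteEnergyOn N s v Ω Ω')
    (hv0 : ∀ᵐ x : EN N, x ∉ Ω → v x = 0) :
    Integrable (fun p : EN N × EN N =>
      (u p.1 - u p.2) * (v p.1 - v p.2) / dist p.1 p.2 ^ ((N:ℝ) + 2*s)) := by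
  have hs0 := hs.1
  set q : ℝ := (N:ℝ) + 2*s with hqdef
  have hq0 : 0 < q := by positivity
  have hqN : (N:ℝ) < q := by rw [hqdef]; linarith
  have hum : AEMeasurable u := aux_aemeasurable hs0 hu1
  have hvm : AEMeasurable v := aux_aemeasurable hs0 hv1
  set F : EN N × EN N → ℝ :=
    fun p => (u p.1 - u p.2) * (v p.1 - v p.2) / dist p.1 p.2 ^ q with hF
  clear_value q
  unfold FiniteEnergyOn at huE hvE
  rw [← hqdef] at huE hvE
  have hFaem : AEMeasurable F := aux_F_aem q hq0.le hum hvm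
  have hFsymm : ∀ p : EN N × EN N, F (p.2, p.1) = F p := by
    intro p
    show (u p.2 - u p.1) * (v p.2 - v p.1) / dist p.2 p.1 ^ q = _
    rw [dist_comm]
    simp only [hF]; ring
  -- geometric constants
  obtain ⟨δ, hδ0, hδ⟩ := hΩb.isCompact_closure.exists_thickening_subset_open hΩ'o hcl
  obtain ⟨R0, hR0⟩ := hΩb.subset_closedBall 0
  set R : ℝ := max R0 0 with hRdef
  have hRnn : 0 ≤ R := le_max_right _ _
  have hxR : ∀ x ∈ Ω, ‖x‖ ≤ R := by
    intro x hx
    have := hR0 hx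
    rw [mem_closedBall, dist_zero_right] at this
    exact this.trans (le_max_left _ _)
  have hdistΩ : ∀ x ∈ Ω, ∀ y, y ∉ Ω' → δ ≤ dist x y := by
    intro x hx y hy
    by_contra h
    push_neg at h
    exact hy (hδ (Metric.mem_thickening_iff.mpr ⟨x, subset_closure hx, by rwa [dist_comm]⟩))
  set C : ℝ := δ⁻¹ ^ q + (R/δ + 1) ^ q with hC
  have hC0 : 0 < C := by rw [hC]; positivity
  clear_value C
  have hkey : ∀ x ∈ Ω, ∀ y, y ∉ Ω' → 1 + ‖y‖ ^ q ≤ C * dist x y ^ q := fun x hx y hy => by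
    rw [hC]; exact aux_dist_bound q δ R hq0.le hδ0 hRnn x y (hxR x hx) (hdistΩ x hx y hy)
  have hΩm : MeasurableSet Ω := hΩo.measurableSet
  have hΩ'm : MeasurableSet Ω' := hΩ'o.measurableSet
  have hΩsub : Ω ⊆ Ω' := subset_closure.trans hcl
  -- auxiliary integrable functions
  have hvabs : IntegrableOn (fun x => |v x|) Ω := by
    have hconst : IntegrableOn (fun _ : EN N => (1:ℝ)) Ω := by
      rw [integrableOn_const_iff]; exact Or.inr hΩb.measure_lt_top
    refine Integrable.mono' (hv2.add hconst)
      ((hvm.restrict.aestronglyMeasurable).norm.congr ?_) (ae_of_all _ fun x => ?_)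
    · exact Eventually.of_forall fun x => (Real.norm_eq_abs (v x))
    · simp only [Pi.add_apply, Real.norm_eq_abs, abs_abs]
      nlinarith [sq_nonneg (|v x| - 1), sq_abs (v x), abs_nonneg (v x)]
  have huv : IntegrableOn (fun x => |u x| * |v x|) Ω := by
    refine Integrable.mono' (hu2.add hv2)
      (((hum.restrict.aestronglyMeasurable).norm.mul
        (hvm.restrict.aestronglyMeasurable).norm).congr ?_) (ae_of_all _ fun x => ?_)
    · exact Eventually.of_forall fun x => by simp [Real.norm_eq_abs]
    · simp only [Pi.add_apply, Real.norm_eq_abs]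
      rw [abs_of_nonneg (mul_nonneg (abs_nonneg (u x)) (abs_nonneg (v x)))]
      nlinarith [sq_nonneg (|u x| - |v x|), sq_abs (u x), sq_abs (v x)]
  have huw : Integrable (fun y : EN N => |u y| / (1 + ‖y‖ ^ q)) := by
    have := (hu1 : Integrable _ _).abs
    refine this.congr (Eventually.of_forall fun x => ?_)
    simp only [abs_div, abs_of_pos (aux_w_pos ((N:ℝ) + 2*s) x)]
    rw [hqdef]
  have hinvw : Integrable (fun y : EN N => (1 + ‖y‖ ^ q)⁻¹) := aux_int_inv_w q hqN
  -- T1 : Ω × Ω'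
  have hT1 : IntegrableOn F (Ω ×ˢ Ω') := by
    refine Integrable.mono' (huE.add hvE) (hFaem.aestronglyMeasurable.restrict)
      (ae_of_all _ fun p => ?_)
    have hd : (0:ℝ) ≤ dist p.1 p.2 ^ q := Real.rpow_nonneg dist_nonneg _
    simp only [Pi.add_apply, hF, Real.norm_eq_abs]
    rw [abs_div, abs_of_nonneg hd, ← add_div]
    refine aux_div_mono ?_ hd
    rw [abs_mul]
    nlinarith [sq_nonneg (|u p.1 - u p.2| - |v p.1 - v p.2|), sq_abs (u p.1 - u p.2),
      sq_abs (v p.1 - v p.2), abs_nonneg (u p.1 - u p.2), abs_nonneg (v p.1 - v p.2)]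
  -- T2 : Ω × Ω'ᶜ
  have hT2 : IntegrableOn F (Ω ×ˢ Ω'ᶜ) := by
    have hg1 : IntegrableOn (fun p : EN N × EN N =>
        (C * (|u p.1| * |v p.1|)) * (1 + ‖p.2‖ ^ q)⁻¹) (Ω ×ˢ Ω'ᶜ) :=
      aux_prod_integrableOn (f := fun x => C * (|u x| * |v x|))
        (g := fun y => (1 + ‖y‖ ^ q)⁻¹) (huv.const_mul C) (hinvw.integrableOn)
    have hg2 : IntegrableOn (fun p : EN N × EN N =>
        |v p.1| * (C * (|u p.2| / (1 + ‖p.2‖ ^ q)))) (Ω ×ˢ Ω'ᶜ) :=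
      aux_prod_integrableOn (f := fun x => |v x|)
        (g := fun y => C * (|u y| / (1 + ‖y‖ ^ q))) hvabs ((huw.const_mul C).integrableOn)
    refine Integrable.mono' (hg1.add hg2) (hFaem.aestronglyMeasurable.restrict) ?_
    filter_upwards [ae_restrict_mem (hΩm.prod hΩ'm.compl),
      ae_restrict_of_ae (aux_ae_prod_snd hv0)] with p hp hp2
    obtain ⟨hp1, hp2'⟩ := hp
    have hyΩ : p.2 ∉ Ω := fun h => hp2' (hΩsub h)
    have hv2z : v p.2 = 0 := hp2 hyΩ
    have hdd : δ ≤ dist p.1 p.2 := hdistΩ p.1 hp1 p.2 hp2'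
    have hd0 : (0:ℝ) < dist p.1 p.2 ^ q := Real.rpow_pos_of_pos (lt_of_lt_of_le hδ0 hdd) _
    have hw0 : (0:ℝ) < 1 + ‖p.2‖ ^ q := aux_w_pos q p.2
    have hdq : (1 + ‖p.2‖ ^ q) / C ≤ dist p.1 p.2 ^ q := by
      rw [div_le_iff₀ hC0]
      calc 1 + ‖p.2‖ ^ q ≤ C * dist p.1 p.2 ^ q := hkey p.1 hp1 p.2 hp2'
        _ = dist p.1 p.2 ^ q * C := by ring
    have step1 : ‖F p‖ = |u p.1 - u p.2| * |v p.1| / dist p.1 p.2 ^ q := by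
      rw [Real.norm_eq_abs, hF, abs_div, abs_of_nonneg hd0.le, abs_mul, hv2z, sub_zero]
    have step2 : |u p.1 - u p.2| * |v p.1| / dist p.1 p.2 ^ q ≤
        |u p.1 - u p.2| * |v p.1| * C / (1 + ‖p.2‖ ^ q) := by
      have := div_le_div_of_nonneg_left
        (mul_nonneg (abs_nonneg (u p.1 - u p.2)) (abs_nonneg (v p.1)))
        (div_pos hw0 hC0) hdq
      calc |u p.1 - u p.2| * |v p.1| / dist p.1 p.2 ^ q
          ≤ |u p.1 - u p.2| * |v p.1| / ((1 + ‖p.2‖ ^ q) / C) := this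
        _ = |u p.1 - u p.2| * |v p.1| * C / (1 + ‖p.2‖ ^ q) := by
            field_simp
    have step3 : |u p.1 - u p.2| * |v p.1| * C / (1 + ‖p.2‖ ^ q) ≤
        (|u p.1| + |u p.2|) * |v p.1| * C / (1 + ‖p.2‖ ^ q) := by
      refine aux_div_mono ?_ hw0.le
      have habs : |u p.1 - u p.2| ≤ |u p.1| + |u p.2| := by
        calc |u p.1 - u p.2| = |u p.1 + -u p.2| := by rw [sub_eq_add_neg]
          _ ≤ |u p.1| + |-u p.2| := abs_add_le _ _
          _ = |u p.1| + |u p.2| := by rw [abs_neg]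
      exact mul_le_mul_of_nonneg_right
        (mul_le_mul_of_nonneg_right habs (abs_nonneg _)) hC0.le
    have step4 : (|u p.1| + |u p.2|) * |v p.1| * C / (1 + ‖p.2‖ ^ q) =
        (C * (|u p.1| * |v p.1|)) * (1 + ‖p.2‖ ^ q)⁻¹ +
          |v p.1| * (C * (|u p.2| / (1 + ‖p.2‖ ^ q))) := by
      field_simp
    calc ‖F p‖ = _ := step1
      _ ≤ _ := step2
      _ ≤ _ := step3
      _ = _ := step4
  -- swapped pieces
  have hT3 : IntegrableOn F (Ω' ×ˢ Ω) := aux_swap_integrableOn hFsymm hT1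
  have hT4 : IntegrableOn F (Ω'ᶜ ×ˢ Ω) := aux_swap_integrableOn hFsymm hT2
  -- T5 : Ωᶜ × Ωᶜ
  have hT5 : IntegrableOn F (Ωᶜ ×ˢ Ωᶜ) := by
    have h0 : ∀ᵐ p : EN N × EN N ∂(volume.restrict (Ωᶜ ×ˢ Ωᶜ)), F p = 0 := by
      filter_upwards [ae_restrict_mem (hΩm.compl.prod hΩm.compl),
        ae_restrict_of_ae (aux_ae_prod_fst hv0),
        ae_restrict_of_ae (aux_ae_prod_snd hv0)] with p hp h1 h2
      have : v p.1 = 0 := h1 hp.1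
      have : v p.2 = 0 := h2 hp.2
      simp [hF, *]
    exact (integrable_zero _ _ _).congr (h0.mono fun p hp => hp.symm)
  -- combine
  have hcover : (univ : Set (EN N × EN N)) ⊆
      ((((Ω ×ˢ Ω') ∪ (Ω ×ˢ Ω'ᶜ)) ∪ (Ω' ×ˢ Ω)) ∪ (Ω'ᶜ ×ˢ Ω)) ∪ (Ωᶜ ×ˢ Ωᶜ) := by
    rintro ⟨x, y⟩ -
    simp only [mem_union, mem_prod, mem_compl_iff]
    by_cases hx : x ∈ Ω <;> by_cases hy : y ∈ Ω' <;> by_cases hx' : x ∈ Ω' <;>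
      by_cases hy' : y ∈ Ω <;> tauto
  rw [← integrableOn_univ]
  exact ((((hT1.union hT2).union hT3).union hT4).union hT5).mono_set hcover

lemma aux_memHs0 {N : ℕ} (hN : 2 ≤ N) {s : ℝ} (hs : s ∈ Ioo (0:ℝ) 1)
    {Ω Ω' : Set (EN N)} (hΩo : IsOpen Ω) (hΩb : Bornology.IsBounded Ω)
    (hΩ'o : IsOpen Ω') (hcl : closure Ω ⊆ Ω')
    {v : EN N → ℝ}
    (hv1 : MemL1w N s v) (hv2 : IntegrableOn (fun x => (v x)^2) Ω)
    (hvE : FiniteEnergyOn N s v Ω Ω')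
    (hv0 : ∀ᵐ x : EN N, x ∉ Ω → v x = 0) :
    MemHs0 N s Ω v := by
  have hsq : Integrable (fun x => (v x)^2) := by
    rw [← integrableOn_univ]
    have hcompl : IntegrableOn (fun x => (v x)^2) Ωᶜ := by
      have h0 : ∀ᵐ x ∂(volume.restrict Ωᶜ), (v x)^2 = 0 := by
        filter_upwards [ae_restrict_mem hΩo.measurableSet.compl, ae_restrict_of_ae hv0]
          with x h1 h2
        rw [h2 h1]; ring
      exact (integrable_zero _ _ _).congr (h0.mono fun x hx => hx.symm)
    refine (hv2.union hcompl).mono_set fun x _ => ?_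
    by_cases h : x ∈ Ω
    exacts [Or.inl h, Or.inr h]
  refine ⟨⟨fun K _ => hsq.integrableOn, ?_⟩, hv0⟩
  have hk := aux_key hN hs hΩo hΩb hΩ'o hcl hv1 hv2 hvE hv1 hv2 hvE hv0
  unfold FiniteEnergyOn
  rw [aux_sq_eq, Set.univ_prod_univ, integrableOn_univ]
  exact hk

lemma aux_parts (a b : ℝ) :
    (max (-a) 0 - max (-b) 0) * (max (-a) 0 - max (-b) 0) ≤
      -((a - b) * (max (-a) 0 - max (-b) 0)) := by
  rcases le_total a 0 with ha|ha <;> rcases le_total b 0 with hb|hb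
  · rw [max_eq_left (neg_nonneg.mpr ha), max_eq_left (neg_nonneg.mpr hb)]; nlinarith
  · rw [max_eq_left (neg_nonneg.mpr ha), max_eq_right (neg_nonpos.mpr hb)]
    nlinarith [mul_nonneg (neg_nonneg.mpr ha) hb]
  · rw [max_eq_right (neg_nonpos.mpr ha), max_eq_left (neg_nonneg.mpr hb)]
    nlinarith [mul_nonneg ha (neg_nonneg.mpr hb)]
  · rw [max_eq_right (neg_nonpos.mpr ha), max_eq_right (neg_nonpos.mpr hb)]; nlinarith

/-- Lemma 4.4 (ii)-(iv): positive/negative parts of `W^s(Ω)` functions,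
`W^s(Ω)` functions vanishing outside `Ω` belong to `H^s_0(Ω)`, and the energy
inequality for the negative part. -/
theorem Ws_lattice_properties
    (N : ℕ) (hN : 2 ≤ N) (s : ℝ) (hs : s ∈ Ioo (0:ℝ) 1)
    (Ω : Set (EN N)) (hΩ : IsBoundedDomain N Ω) :
    (∀ u : EN N → ℝ, MemWs N s Ω u →
      MemWs N s Ω (fun x => max (u x) 0) ∧ MemWs N s Ω (fun x => max (-u x) 0)) ∧
    (∀ u : EN N → ℝ, MemWs N s Ω u → (∀ x ∉ Ω, u x = 0) → MemHs0 N s Ω u) ∧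
    (∀ u : EN N → ℝ, MemWs N s Ω u → (∀ᵐ x : EN N, x ∉ Ω → 0 ≤ u x) →
      MemHs0 N s Ω (fun x => max (-u x) 0) ∧
      Es N s (fun x => max (-u x) 0) (fun x => max (-u x) 0) ≤
        -(Es N s u (fun x => max (-u x) 0))) := by
  obtain ⟨hΩo, hΩc, hΩb⟩ := hΩ
  have hs0 := hs.1
  have habs1 : ∀ w : ℝ, |max w 0| ≤ |w| := fun w => by
    rw [abs_of_nonneg (le_max_right w 0)]
    exact max_le (le_abs_self w) (abs_nonneg w)
  have hcontr1 : ∀ (u : EN N → ℝ) (x y : EN N),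
      |max (u x) 0 - max (u y) 0| ≤ |u x - u y| := fun u x y =>
    abs_max_sub_max_le_abs (u x) (u y) 0
  have hcontr2 : ∀ (u : EN N → ℝ) (x y : EN N),
      |max (-u x) 0 - max (-u y) 0| ≤ |u x - u y| := fun u x y => by
    have := abs_max_sub_max_le_abs (-u x) (-u y) 0
    rwa [neg_sub_neg, abs_sub_comm (u y) (u x)] at this
  refine ⟨fun u hu => ?_, fun u hu hz => ?_, fun u hu hpos => ?_⟩
  · -- part (a)
    have hum := aux_aemeasurable hs0 hu.1
    constructor
    · exact aux_memWs_of_contraction hs0 (hum.max aemeasurable_const)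
        (fun x => habs1 (u x)) (hcontr1 u) hu
    · refine aux_memWs_of_contraction hs0 (hum.neg.max aemeasurable_const)
        (fun x => ?_) (hcontr2 u) hu
      rw [← abs_neg (u x)]
      exact habs1 (-u x)
  · -- part (b)
    obtain ⟨hu1, hu2, Ω', hΩ'o, hΩ'c, hcl, huE⟩ := hu
    exact aux_memHs0 hN hs hΩo hΩb hΩ'o hcl hu1 hu2 huE
      (ae_of_all _ hz)
  · -- part (c)
    obtain ⟨hu1, hu2, Ω', hΩ'o, hΩ'c, hcl, huE⟩ := hu
    have hum := aux_aemeasurable hs0 hu1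
    set v : EN N → ℝ := fun x => max (-u x) 0 with hv
    have hvm : AEMeasurable v := hum.neg.max aemeasurable_const
    have habs : ∀ x, |v x| ≤ |u x| := fun x => by
      rw [hv, ← abs_neg (u x)]; exact habs1 (-u x)
    have hvWs : MemWs N s Ω v := aux_memWs_of_contraction hs0 hvm habs (hcontr2 u)
      ⟨hu1, hu2, Ω', hΩ'o, hΩ'c, hcl, huE⟩
    have hv1 : MemL1w N s v := hvWs.1
    have hv2 : IntegrableOn (fun x => (v x)^2) Ω := hvWs.2.1
    have hvE : FiniteEnergyOn N s v Ω Ω' := aux_FE_mono hs0 hvm (hcontr2 u) huE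
    have hv0 : ∀ᵐ x : EN N, x ∉ Ω → v x = 0 := by
      filter_upwards [hpos] with x hx hxo
      rw [hv]
      exact max_eq_right (neg_nonpos.mpr (hx hxo))
    refine ⟨aux_memHs0 hN hs hΩo hΩb hΩ'o hcl hv1 hv2 hvE hv0, ?_⟩
    have hIf : Integrable (fun p : EN N × EN N =>
        (v p.1 - v p.2) * (v p.1 - v p.2) / dist p.1 p.2 ^ ((N:ℝ) + 2*s)) :=
      aux_key hN hs hΩo hΩb hΩ'o hcl hv1 hv2 hvE hv1 hv2 hvE hv0
    have hIg : Integrable (fun p : EN N × EN N =>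
        (u p.1 - u p.2) * (v p.1 - v p.2) / dist p.1 p.2 ^ ((N:ℝ) + 2*s)) :=
      aux_key hN hs hΩo hΩb hΩ'o hcl hu1 hu2 huE hv1 hv2 hvE hv0
    have hC2 : (0:ℝ) ≤ CNs N s / 2 := (div_pos (aux_CNs_pos hs) two_pos).le
    unfold Es
    rw [← mul_neg]
    refine mul_le_mul_of_nonneg_left ?_ hC2
    rw [← integral_neg]
    refine integral_mono hIf hIg.neg fun p => ?_
    simp only [Pi.neg_apply]
    rw [← neg_div]
    exact aux_div_mono (aux_parts (u p.1) (u p.2)) (Real.rpow_nonneg dist_nonneg _)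
end
end
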